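/- arXiv:2406.06819 — 8 statements merged into one kernel-verified Lean document; each statement's English description precedes it below -/
import Mathlib

section
/- For every k ≥ 1, the 2k×2k nilpotent Jordan block 𝒥_{2k} is conjugate in GL(2k,ℝ) to a matrix D ∈ 𝔰𝔭(2k,ℝ), i.e. a matrix D satisfying Dᵀ J_k + J_k D = 0 where J_k = [[0, −I_k],[I_k, 0]] in block form. -/
open Matrix Module

noncomputable section

/-- The `n × n` real nilpotent Jordan block `𝒥ₙ`, with `1`s on the subdiagonal
and `0`s elsewhere. -/
def jordanBlock (n : ℕ) : Matrix (Fin n) (Fin n) ℝ :=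
  Matrix.of fun i j => if (i : ℕ) = (j : ℕ) + 1 then 1 else 0

/-- Two square real matrices with the same index type are conjugate:
`B = P * A * P⁻¹` for some invertible `P`. -/
def MatConj {ι : Type*} [Fintype ι] [DecidableEq ι] (A B : Matrix ι ι ℝ) : Prop :=
  ∃ P : Matrix ι ι ℝ, IsUnit P ∧ B = P * A * P⁻¹

/-- Conjugacy of square real matrices indexed by possibly different (equipotent)
index types: after relabelling the rows/columns of `A` by a bijection, the two
matrices are conjugate. -/
def MatConj' {ι κ : Type*} [Fintype ι] [DecidableEq ι] [Fintype κ] [DecidableEq κ]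
    (A : Matrix ι ι ℝ) (B : Matrix κ κ ℝ) : Prop :=
  ∃ e : ι ≃ κ, MatConj (Matrix.reindex e e A) B

/-- The Lie bracket of the almost abelian Lie algebra `𝔤_A = ℝe₀ ⋉_A ℝ^ι`, on the
underlying vector space `ℝ × (ι → ℝ)`:  `[(t,v),(s,w)] = (0, t • A w − s • A v)`. -/
def aaBracket {ι : Type*} [Fintype ι] (A : Matrix ι ι ℝ) :
    ℝ × (ι → ℝ) → ℝ × (ι → ℝ) → ℝ × (ι → ℝ) :=
  fun x y => (0, x.1 • A.mulVec y.2 - y.1 • A.mulVec x.2)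

/-- The almost abelian Lie algebra `𝔤_A` admits a complex structure: a linear
endomorphism `j` with `j² = -id` whose Nijenhuis tensor vanishes. -/
def HasComplexStructure {ι : Type*} [Fintype ι] (A : Matrix ι ι ℝ) : Prop :=
  ∃ j : (ℝ × (ι → ℝ)) →ₗ[ℝ] ℝ × (ι → ℝ),
    (∀ x, j (j x) = -x) ∧
    (∀ x y, aaBracket A x y + j (aaBracket A (j x) y + aaBracket A x (j y))
        - aaBracket A (j x) (j y) = 0)

/-- The almost abelian Lie algebra `𝔤_A` admits a symplectic structure: a
non-degenerate alternating bilinear form which is closed. -/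
def HasSymplecticStructure {ι : Type*} [Fintype ι] (A : Matrix ι ι ℝ) : Prop :=
  ∃ ω : (ℝ × (ι → ℝ)) →ₗ[ℝ] (ℝ × (ι → ℝ)) →ₗ[ℝ] ℝ,
    (∀ x, ω x x = 0) ∧
    (∀ x, (∀ y, ω x y = 0) → x = 0) ∧
    (∀ x y z, ω (aaBracket A x y) z + ω (aaBracket A y z) x + ω (aaBracket A z x) y = 0)

/-- The standard symplectic matrix `J_k = [[0,-I_k],[I_k,0]]`. -/
def stdSymplJ (k : ℕ) : Matrix (Fin k ⊕ Fin k) (Fin k ⊕ Fin k) ℝ :=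
  Matrix.fromBlocks 0 (-1) 1 0

/-!
The Hamiltonian matrix `D = [[𝒥_k, E₀₀], [0, -𝒥_kᵀ]]` consists of a single nilpotent chain.
Writing `e`, `e'` for the standard bases of the two halves of `ℝ^k ⊕ ℝ^k`, it acts by
`e'_{k-1} ↦ -e'_{k-2} ↦ ⋯ ↦ ±e'_0 ↦ ±e_0 ↦ e_1 ↦ ⋯ ↦ e_{k-1} ↦ 0`.
Listing the basis along this chain turns `𝒥_{2k}` into `D` up to the signs, and conjugating
by a diagonal `±1` matrix fixes the signs.
-/

theorem fromBlocks_transpose_mul_stdSymplJ_add_stdSymplJ_mul {k : ℕ}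
    (A B C : Matrix (Fin k) (Fin k) ℝ) (hB : Bᵀ = B) (hC : Cᵀ = C) :
    (fromBlocks A B C (-Aᵀ))ᵀ * stdSymplJ k + stdSymplJ k * fromBlocks A B C (-Aᵀ) = 0 := by
  simp [stdSymplJ, fromBlocks_transpose, fromBlocks_multiply, fromBlocks_add, hB, hC]

theorem matConj_diagonal_mul_mul_diagonal {ι : Type*} [Fintype ι] [DecidableEq ι]
    (s : ι → ℝ) (hs : ∀ i, s i * s i = 1) (M : Matrix ι ι ℝ) :
    MatConj M (diagonal s * M * diagonal s) := by
  have hss : diagonal s * diagonal s = 1 := by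
    rw [diagonal_mul_diagonal, ← diagonal_one]
    exact congrArg diagonal (funext hs)
  exact ⟨diagonal s, ⟨⟨_, _, hss, hss⟩, rfl⟩, by rw [inv_eq_right_inv hss]⟩

def cornerUnit (k : ℕ) : Matrix (Fin k) (Fin k) ℝ :=
  of fun i j => if (i : ℕ) = 0 ∧ (j : ℕ) = 0 then 1 else 0

theorem cornerUnit_transpose (k : ℕ) : (cornerUnit k)ᵀ = cornerUnit k := by
  ext i j
  simp [cornerUnit, and_comm]

def jordanBlockSp (k : ℕ) : Matrix (Fin k ⊕ Fin k) (Fin k ⊕ Fin k) ℝ :=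
  fromBlocks (jordanBlock k) (cornerUnit k) 0 (-(jordanBlock k)ᵀ)

theorem jordanBlockSp_transpose_mul_stdSymplJ_add_stdSymplJ_mul (k : ℕ) :
    (jordanBlockSp k)ᵀ * stdSymplJ k + stdSymplJ k * jordanBlockSp k = 0 :=
  fromBlocks_transpose_mul_stdSymplJ_add_stdSymplJ_mul _ _ _ (cornerUnit_transpose k)
    transpose_zero

/-- Position of each basis vector in the Jordan chain of `jordanBlockSp k`. -/
def jordanChainEquiv (k : ℕ) : Fin k ⊕ Fin k ≃ Fin (2 * k) :=
  (Equiv.sumComm _ _).trans <| (Equiv.sumCongr Fin.revPerm (Equiv.refl _)).trans <|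
    finSumFinEquiv.trans (finCongr (two_mul k).symm)

@[simp]
theorem jordanChainEquiv_inl_val {k : ℕ} (i : Fin k) :
    (jordanChainEquiv k (.inl i) : ℕ) = k + i := by
  simp [jordanChainEquiv, add_comm]

@[simp]
theorem jordanChainEquiv_inr_val {k : ℕ} (j : Fin k) :
    (jordanChainEquiv k (.inr j) : ℕ) = k - 1 - j := by
  simp [jordanChainEquiv, Fin.val_rev]
  omega

def jordanChainSign (k : ℕ) : Fin k ⊕ Fin k → ℝ :=
  Sum.elim 1 fun j => (-1) ^ (j : ℕ)

theorem jordanChainSign_mul_self {k : ℕ} (a : Fin k ⊕ Fin k) :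
    jordanChainSign k a * jordanChainSign k a = 1 := by
  rcases a with i | j <;> simp [jordanChainSign, ← pow_add, ← two_mul, pow_mul]

theorem diagonal_jordanChainSign_mul_reindex_jordanBlock_mul (k : ℕ) :
    diagonal (jordanChainSign k) *
        reindex (jordanChainEquiv k).symm (jordanChainEquiv k).symm (jordanBlock (2 * k)) *
      diagonal (jordanChainSign k) = jordanBlockSp k := by
  ext (i | i) (j | j) <;>
    simp only [diagonal_mul, mul_diagonal, reindex_apply, submatrix_apply, Equiv.symm_symm,
      jordanBlockSp, fromBlocks_apply₁₁, fromBlocks_apply₁₂, fromBlocks_apply₂₁,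
      fromBlocks_apply₂₂, jordanBlock, cornerUnit, of_apply, Matrix.zero_apply, Matrix.neg_apply,
      transpose_apply, jordanChainSign, Sum.elim_inl, Sum.elim_inr, Pi.one_apply,
      jordanChainEquiv_inl_val, jordanChainEquiv_inr_val, mul_ite, ite_mul, mul_one, one_mul,
      mul_zero, zero_mul]
  · exact if_congr (by omega) rfl rfl
  · split_ifs with h h'
    · simp [h'.2]
    · omega
    · omega
    · rfl
  · exact if_neg (by omega)
  · split_ifs with h h'
    · rw [h', pow_succ, ← mul_assoc, ← mul_pow]
      norm_num
    · omega
    · omega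
    · simp

theorem matConj'_jordanBlock_jordanBlockSp (k : ℕ) :
    MatConj' (jordanBlock (2 * k)) (jordanBlockSp k) := by
  refine ⟨(jordanChainEquiv k).symm, ?_⟩
  rw [← diagonal_jordanChainSign_mul_reindex_jordanBlock_mul]
  exact matConj_diagonal_mul_mul_diagonal _ jordanChainSign_mul_self _

theorem stmt4_general (k : ℕ) :
    ∃ D : Matrix (Fin k ⊕ Fin k) (Fin k ⊕ Fin k) ℝ,
      Dᵀ * stdSymplJ k + stdSymplJ k * D = 0 ∧
      MatConj' (jordanBlock (2 * k)) D :=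
  ⟨jordanBlockSp k, jordanBlockSp_transpose_mul_stdSymplJ_add_stdSymplJ_mul k,
    matConj'_jordanBlock_jordanBlockSp k⟩

/-- For every `k ≥ 1`, the nilpotent Jordan block `𝒥_{2k}` is
conjugate to a matrix `D` with `Dᵀ J_k + J_k D = 0`, i.e. `D ∈ 𝔰𝔭(2k,ℝ)`. -/
theorem stmt4 (k : ℕ) (hk : 1 ≤ k) :
    ∃ D : Matrix (Fin k ⊕ Fin k) (Fin k ⊕ Fin k) ℝ,
      Dᵀ * stdSymplJ k + stdSymplJ k * D = 0 ∧
      MatConj' (jordanBlock (2 * k)) D :=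
  stmt4_general k
end
end

section
/- Let 𝔤 be a 2n-dimensional real Lie algebra possessing an abelian ideal 𝔥 of codimension one, and let ω be a symplectic structure on 𝔤. Then there exist e₀ ∈ 𝔤 with e₀ ∉ 𝔥, e₁ ∈ 𝔥, c ∈ ℝ, and a linear subspace 𝔲 ⊆ 𝔥 such that: 𝔥 = ℝe₁ ⊕ 𝔲; ω(e₀,e₁) = 1; ω(e₀,u) = 0 and ω(e₁,u) = 0 for all u ∈ 𝔲; the restriction ω_𝔲 of ω to 𝔲 × 𝔲 is non-degenerate; [e₀,e₁] = c e₁; and the map u ↦ Π([e₀,u]) on 𝔲 (where Π : 𝔥 → 𝔲 is the projection onto 𝔲 along ℝe₁) is ω_𝔲-skew, i.e. ω(Π[e₀,x], y) + ω(x, Π[e₀,y]) = 0 for all x, y ∈ 𝔲. -/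
open Matrix Module

noncomputable section

/-- Let `𝔤` be a `2n`-dimensional real Lie algebra with an abelian
ideal `𝔥` of codimension one, and let `ω` be a symplectic structure on `𝔤`. Then
there are `e₀ ∉ 𝔥`, `e₁ ∈ 𝔥`, `c ∈ ℝ` and a subspace `𝔲 ⊆ 𝔥` with
`𝔥 = ℝe₁ ⊕ 𝔲`, `ω(e₀,e₁) = 1`, `ω(e₀,u) = ω(e₁,u) = 0` for `u ∈ 𝔲`, `ω|_{𝔲×𝔲}`
non-degenerate, `[e₀,e₁] = c e₁`, and `u ↦ Π[e₀,u]` is `ω_𝔲`-skew, where `Π` is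
the projection of `𝔥` onto `𝔲` along `ℝe₁`. -/
theorem stmt5 (n : ℕ) (L : Type*) [LieRing L] [LieAlgebra ℝ L] [FiniteDimensional ℝ L]
    (hdim : Module.finrank ℝ L = 2 * n)
    (H : LieIdeal ℝ L)
    (habel : ∀ x ∈ H, ∀ y ∈ H, ⁅x, y⁆ = (0 : L))
    (hcodim : Module.finrank ℝ H.toSubmodule + 1 = Module.finrank ℝ L)
    (ω : L →ₗ[ℝ] L →ₗ[ℝ] ℝ)
    (halt : ∀ x, ω x x = 0)
    (hnd : ∀ x, (∀ y, ω x y = 0) → x = 0)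
    (hclosed : ∀ x y z, ω ⁅x, y⁆ z + ω ⁅y, z⁆ x + ω ⁅z, x⁆ y = 0) :
    ∃ (e₀ e₁ : L) (c : ℝ) (U : Submodule ℝ L) (π : L →ₗ[ℝ] L),
      e₀ ∉ H ∧ e₁ ∈ H ∧
      U ≤ H.toSubmodule ∧
      Submodule.span ℝ {e₁} ⊔ U = H.toSubmodule ∧
      Submodule.span ℝ {e₁} ⊓ U = ⊥ ∧
      ω e₀ e₁ = 1 ∧
      (∀ u ∈ U, ω e₀ u = 0 ∧ ω e₁ u = 0) ∧
      (∀ x ∈ U, (∀ y ∈ U, ω x y = 0) → x = 0) ∧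
      ⁅e₀, e₁⁆ = c • e₁ ∧
      π e₁ = 0 ∧ (∀ u ∈ U, π u = u) ∧ (∀ x, π x ∈ U) ∧
      (∀ x ∈ U, ∀ y ∈ U, ω (π ⁅e₀, x⁆) y + ω x (π ⁅e₀, y⁆) = 0) := by
  classical
  have hskew : ∀ x y : L, ω x y = -ω y x := by
    intro x y
    have h := halt (x + y)
    simp only [map_add, LinearMap.add_apply, halt] at h
    linarith
  set Hs := H.toSubmodule with hHsdef
  -- any vector outside Hs together with Hs spans everything
  have hsup_top : ∀ v : L, v ∉ Hs → Submodule.span ℝ {v} ⊔ Hs = ⊤ := by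
    intro v hv
    have h1 : Hs < Submodule.span ℝ {v} ⊔ Hs := by
      refine lt_of_le_of_ne le_sup_right ?_
      intro h
      exact hv (h ▸ Submodule.mem_sup_left (Submodule.mem_span_singleton_self v))
    have h2 := Submodule.finrank_lt_finrank_of_lt h1
    have h3 := Submodule.finrank_le (Submodule.span ℝ {v} ⊔ Hs)
    have h4 : finrank ℝ (Submodule.span ℝ {v} ⊔ Hs : Submodule ℝ L) = finrank ℝ L := by omega
    exact Submodule.eq_top_of_finrank_eq h4
  -- find e₁ ≠ 0 orthogonal to all of H
  obtain ⟨e₁, he₁mem, he₁0⟩ : ∃ e₁ ∈ LinearMap.ker ((LinearMap.lcomp ℝ ℝ Hs.subtype).comp ω),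
      e₁ ≠ (0 : L) := by
    apply Submodule.exists_mem_ne_zero_of_ne_bot
    intro hbot
    have hinj : Function.Injective ((LinearMap.lcomp ℝ ℝ Hs.subtype).comp ω) :=
      LinearMap.ker_eq_bot.mp hbot
    have hle := LinearMap.finrank_le_finrank_of_injective hinj
    have hd : finrank ℝ (Module.Dual ℝ Hs) = finrank ℝ Hs := Subspace.dual_finrank_eq
    have h5 : finrank ℝ (Hs →ₗ[ℝ] ℝ) = finrank ℝ Hs := hd
    omega
  have he₁perp : ∀ h ∈ Hs, ω e₁ h = 0 := by
    intro h hh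
    have h6 := LinearMap.mem_ker.mp he₁mem
    exact congrFun (congrArg DFunLike.coe h6) ⟨h, hh⟩
  have he₁H : e₁ ∈ Hs := by
    by_contra hnot
    have htop := hsup_top e₁ hnot
    refine he₁0 (hnd e₁ ?_)
    intro y
    have hy : y ∈ Submodule.span ℝ {e₁} ⊔ Hs := htop ▸ Submodule.mem_top
    obtain ⟨a, ha, b, hb, rfl⟩ := Submodule.mem_sup.mp hy
    obtain ⟨t, rfl⟩ := Submodule.mem_span_singleton.mp ha
    simp [halt e₁, he₁perp b hb]
  -- find e₀ with ω e₀ e₁ = 1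
  obtain ⟨e₀, hω01⟩ : ∃ e₀ : L, ω e₀ e₁ = 1 := by
    obtain ⟨z, hz⟩ : ∃ z, ω e₁ z ≠ 0 := by
      by_contra h
      push_neg at h
      exact he₁0 (hnd e₁ h)
    refine ⟨(-(ω e₁ z)⁻¹) • z, ?_⟩
    have h1 : ω ((-(ω e₁ z)⁻¹) • z) e₁ = (-(ω e₁ z)⁻¹) * ω z e₁ := by
      rw [_root_.map_smul]; rfl
    rw [h1, hskew z e₁, neg_mul_neg, inv_mul_cancel₀ hz]
  have hω10 : ω e₁ e₀ = -1 := by have := hskew e₀ e₁; linarith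
  have he₀H : e₀ ∉ Hs := by
    intro hmem
    have h7 := he₁perp e₀ hmem
    have h8 := hskew e₀ e₁
    rw [hω01, h7] at h8
    norm_num at h8
  have htop : Submodule.span ℝ {e₀} ⊔ Hs = ⊤ := hsup_top e₀ he₀H
  have hdecomp : ∀ y : L, ∃ (t : ℝ) (h : L), h ∈ Hs ∧ y = t • e₀ + h := by
    intro y
    have hy : y ∈ Submodule.span ℝ {e₀} ⊔ Hs := htop ▸ Submodule.mem_top
    obtain ⟨a, ha, b, hb, rfl⟩ := Submodule.mem_sup.mp hy
    obtain ⟨t, rfl⟩ := Submodule.mem_span_singleton.mp ha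
    exact ⟨t, b, hb, rfl⟩
  set U : Submodule ℝ L := Hs ⊓ LinearMap.ker (ω e₀) with hUdef
  have hUmem : ∀ x : L, x ∈ U ↔ (x ∈ Hs ∧ ω e₀ x = 0) := by
    intro x
    rw [hUdef, Submodule.mem_inf, LinearMap.mem_ker]
  clear_value U
  have hUle : U ≤ Hs := fun u hu => ((hUmem u).mp hu).1
  have hUort : ∀ u ∈ U, ω e₀ u = 0 ∧ ω e₁ u = 0 := by
    intro u hu
    exact ⟨((hUmem u).mp hu).2, he₁perp u (hUle hu)⟩
  -- Hs = span e₁ ⊔ U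
  have hHdec : ∀ h ∈ Hs, h - ω e₀ h • e₁ ∈ U := by
    intro h hh
    rw [hUmem]
    constructor
    · exact Submodule.sub_mem _ hh (Submodule.smul_mem _ _ he₁H)
    · rw [map_sub, _root_.map_smul, hω01, smul_eq_mul, mul_one, sub_self]
  have hHsup : Submodule.span ℝ {e₁} ⊔ U = Hs := by
    apply le_antisymm
    · exact sup_le ((Submodule.span_singleton_le_iff_mem _ _).mpr he₁H) hUle
    · intro h hh
      have h9 : h = (ω e₀ h • e₁) + (h - ω e₀ h • e₁) := by abel
      rw [h9]
      exact Submodule.add_mem _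
        (Submodule.mem_sup_left (Submodule.smul_mem _ _ (Submodule.mem_span_singleton_self e₁)))
        (Submodule.mem_sup_right (hHdec h hh))
  have hHinf : Submodule.span ℝ {e₁} ⊓ U = ⊥ := by
    rw [eq_bot_iff]
    intro x hx
    obtain ⟨hx1, hx2⟩ := Submodule.mem_inf.mp hx
    obtain ⟨t, rfl⟩ := Submodule.mem_span_singleton.mp hx1
    have h0 := ((hUmem _).mp hx2).2
    rw [_root_.map_smul, hω01, smul_eq_mul, mul_one] at h0
    rw [h0, Submodule.mem_bot, zero_smul]
  -- the projection
  obtain ⟨π, hπ⟩ : ∃ π : L →ₗ[ℝ] L, ∀ x : L, π x = x + ω e₁ x • e₀ - ω e₀ x • e₁ := by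
    refine ⟨LinearMap.id + (ω e₁).smulRight e₀ - (ω e₀).smulRight e₁, ?_⟩
    intro x
    simp [LinearMap.smulRight_apply]
  have hπe₁ : π e₁ = 0 := by
    rw [hπ, halt e₁, hω01, zero_smul, one_smul, add_zero, sub_self]
  have hπU : ∀ u ∈ U, π u = u := by
    intro u hu
    rw [hπ, (hUort u hu).1, (hUort u hu).2, zero_smul, zero_smul, add_zero, sub_zero]
  have hπe₀ : π e₀ = 0 := by
    rw [hπ, hω10, halt e₀, zero_smul, sub_zero, neg_one_smul]
    abel
  have hπmem : ∀ x : L, π x ∈ U := by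
    intro x
    rw [hUmem]
    constructor
    · obtain ⟨t, h, hh, rfl⟩ := hdecomp x
      rw [map_add, _root_.map_smul, hπe₀, smul_zero, zero_add, hπ, he₁perp h hh, zero_smul, add_zero]
      exact Submodule.sub_mem _ hh (Submodule.smul_mem _ _ he₁H)
    · rw [hπ, map_sub, map_add, _root_.map_smul, _root_.map_smul, halt e₀, hω01]
      simp
  -- bracket lands on span e₁
  obtain ⟨c, hbr⟩ : ∃ c : ℝ, ⁅e₀, e₁⁆ = c • e₁ := by
    set w : L := ⁅e₀, e₁⁆ with hwdef
    have hwH : w ∈ Hs := lie_mem_right ℝ L H e₀ e₁ he₁H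
    have hwperp : ∀ h ∈ Hs, ω w h = 0 := by
      intro h hh
      have hc := hclosed e₀ e₁ h
      have h1 : ⁅e₁, h⁆ = 0 := habel e₁ he₁H h hh
      have h2 : ⁅h, e₀⁆ ∈ Hs := by
        rw [← lie_skew]
        exact Submodule.neg_mem _ (lie_mem_right ℝ L H e₀ h hh)
      have h3 : ω ⁅h, e₀⁆ e₁ = 0 := by
        rw [hskew]
        exact neg_eq_zero.mpr (he₁perp _ h2)
      rw [h1, h3] at hc
      simpa using hc
    refine ⟨ω e₀ w, ?_⟩
    have hkey : w - ω e₀ w • e₁ = 0 := by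
      apply hnd
      intro y
      obtain ⟨t, h, hh, rfl⟩ := hdecomp y
      have hA : ω (w - ω e₀ w • e₁) e₀ = 0 := by
        rw [hskew, map_sub, _root_.map_smul, hω01, smul_eq_mul, mul_one, sub_self, neg_zero]
      have hB : ω (w - ω e₀ w • e₁) h = 0 := by
        rw [map_sub]
        simp only [LinearMap.sub_apply, LinearMap.smul_apply, _root_.map_smul]
        rw [hwperp h hh, he₁perp h hh]
        simp
      rw [map_add, _root_.map_smul]
      simp only [LinearMap.add_apply, LinearMap.smul_apply, smul_eq_mul]
      rw [hA, hB]
      ring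
    exact sub_eq_zero.mp hkey
  refine ⟨e₀, e₁, c, U, π, he₀H, he₁H, hUle, hHsup, hHinf, hω01, hUort, ?_, hbr,
    hπe₁, hπU, hπmem, ?_⟩
  · -- nondegenerate on U
    intro x hx hvan
    apply hnd
    intro y
    obtain ⟨t, h, hh, rfl⟩ := hdecomp y
    have hh2 : h ∈ Submodule.span ℝ {e₁} ⊔ U := hHsup ▸ hh
    obtain ⟨a, ha, u, hu, rfl⟩ := Submodule.mem_sup.mp hh2
    obtain ⟨s, rfl⟩ := Submodule.mem_span_singleton.mp ha
    have h1 : ω x e₀ = 0 := by rw [hskew, (hUort x hx).1, neg_zero]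
    have h2 : ω x e₁ = 0 := by rw [hskew, he₁perp x (hUle hx), neg_zero]
    have h3 : ω x u = 0 := hvan u hu
    rw [map_add, map_add, _root_.map_smul, _root_.map_smul]
    simp only [smul_eq_mul]
    rw [h1, h2, h3]
    ring
  · -- skewness
    intro x hx y hy
    have hbx : ⁅e₀, x⁆ ∈ Hs := lie_mem_right ℝ L H e₀ x (hUle hx)
    have hby : ⁅e₀, y⁆ ∈ Hs := lie_mem_right ℝ L H e₀ y (hUle hy)
    have hπx : π ⁅e₀, x⁆ = ⁅e₀, x⁆ - ω e₀ ⁅e₀, x⁆ • e₁ := by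
      rw [hπ, he₁perp _ hbx, zero_smul, add_zero]
    have hπy : π ⁅e₀, y⁆ = ⁅e₀, y⁆ - ω e₀ ⁅e₀, y⁆ • e₁ := by
      rw [hπ, he₁perp _ hby, zero_smul, add_zero]
    have hye₁ : ω e₁ y = 0 := he₁perp y (hUle hy)
    have hxe₁ : ω x e₁ = 0 := by rw [hskew, he₁perp x (hUle hx), neg_zero]
    have hc := hclosed x y e₀
    have h1 : ⁅x, y⁆ = 0 := habel x (hUle hx) y (hUle hy)
    have h2 : ω ⁅y, e₀⁆ x = ω x ⁅e₀, y⁆ := by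
      rw [← lie_skew e₀ y, map_neg, hskew x ⁅y, e₀⁆, neg_neg]
    rw [h1, h2] at hc
    simp only [map_zero, LinearMap.zero_apply, zero_add] at hc
    rw [hπx, hπy, map_sub, map_sub, _root_.map_smul]
    simp only [LinearMap.sub_apply, LinearMap.smul_apply, smul_eq_mul, _root_.map_smul]
    rw [hye₁, hxe₁]
    linarith
end
end

section
/- Let A ∈ M(2n−1,ℝ) be nilpotent with A^k = 0 and A^{k−1} ≠ 0 (so that the almost abelian Lie algebra 𝔤_A = ℝe₀ ⋉_A ℝ^{2n−1} is k-step nilpotent). If 𝔤_A admits a complex structure, then k ≤ n. -/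
open Matrix Module

noncomputable section

lemma even_finrank_of_sq_neg_one {W : Type*} [AddCommGroup W] [Module ℝ W]
    [FiniteDimensional ℝ W] (ψ : W →ₗ[ℝ] W) (h : ∀ x, ψ (ψ x) = -x) :
    Even (finrank ℝ W) := by
  by_contra hodd
  have hcomp : ψ ∘ₗ ψ = (-1 : ℝ) • LinearMap.id := by
    ext x; simp [h x]
  have hdet : LinearMap.det ψ * LinearMap.det ψ = (-1 : ℝ) ^ finrank ℝ W := by
    rw [← LinearMap.det_comp, hcomp, LinearMap.det_smul, LinearMap.det_id, mul_one]
  rw [(Nat.not_even_iff_odd.mp hodd).neg_one_pow] at hdet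
  nlinarith [hdet]

lemma nilp_pow_half_dim {W : Type*} [AddCommGroup W] [Module ℝ W]
    [FiniteDimensional ℝ W] (B ψ : Module.End ℝ W)
    (hψ : ∀ x, ψ (ψ x) = -x) (hcomm : ∀ x, B (ψ x) = ψ (B x))
    (N : ℕ) (hnil : B ^ N = 0) (m : ℕ) (hm : finrank ℝ W = 2 * m) :
    B ^ m = 0 := by
  -- powers commute with ψ
  have hcomm' : ∀ i x, (B ^ i) (ψ x) = ψ ((B ^ i) x) := by
    intro i
    induction i with
    | zero => intro x; simp
    | succ i ih =>
      intro x
      rw [pow_succ', Module.End.mul_apply, Module.End.mul_apply, ih, hcomm]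
  -- each kernel is ψ-invariant hence even-dimensional
  have heven : ∀ i : ℕ, Even (finrank ℝ (LinearMap.ker (B ^ i))) := by
    intro i
    have hinv : ∀ x ∈ LinearMap.ker (B ^ i), ψ x ∈ LinearMap.ker (B ^ i) := by
      intro x hx
      rw [LinearMap.mem_ker] at hx ⊢
      rw [hcomm', hx, map_zero]
    refine even_finrank_of_sq_neg_one (ψ.restrict hinv) ?_
    intro x
    apply Subtype.ext
    rw [LinearMap.restrict_coe_apply, LinearMap.restrict_coe_apply]
    exact hψ x
  have claim : ∀ i : ℕ, B ^ i = 0 ∨ 2 * i ≤ finrank ℝ (LinearMap.ker (B ^ i)) := by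
    intro i
    induction i with
    | zero => right; simp
    | succ i ih =>
      by_cases h0 : B ^ (i + 1) = 0
      · left; exact h0
      right
      have hBi : B ^ i ≠ 0 := by
        intro h
        exact h0 (by rw [pow_succ, h, zero_mul])
      rcases ih with h | h
      · exact absurd h hBi
      have hne : LinearMap.ker (B ^ i) ≠ LinearMap.ker (B ^ (i + 1)) := by
        intro heq
        apply hBi
        have hconst := Module.End.ker_pow_constant heq N
        have hzero : LinearMap.ker (B ^ (i + N)) = ⊤ := by
          rw [pow_add, hnil, mul_zero]; exact LinearMap.ker_zero
        rw [← hconst] at hzero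
        exact LinearMap.ker_eq_top.mp hzero
      have hlt : finrank ℝ (LinearMap.ker (B ^ i)) <
          finrank ℝ (LinearMap.ker (B ^ (i + 1))) := by
        apply Submodule.finrank_lt_finrank_of_lt
        refine lt_of_le_of_ne ?_ hne
        rw [pow_succ']
        apply LinearMap.ker_le_ker_comp
      obtain ⟨p, hp⟩ := heven i
      obtain ⟨q, hq⟩ := heven (i + 1)
      omega
  rcases claim m with h | h
  · exact h
  · have hle := Submodule.finrank_le (LinearMap.ker (B ^ m))
    have htop : finrank ℝ (LinearMap.ker (B ^ m)) = finrank ℝ W := by omega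
    exact LinearMap.ker_eq_top.mp (Submodule.eq_top_of_finrank_eq htop)



/-- If `A ∈ M(2n-1,ℝ)` satisfies `A^k = 0` and `A^{k-1} ≠ 0`
(so `𝔤_A` is `k`-step nilpotent) and `𝔤_A` admits a complex structure, then
`k ≤ n`. -/
theorem stmt7 (n k : ℕ)
    (A : Matrix (Fin (2 * n - 1)) (Fin (2 * n - 1)) ℝ)
    (hk : A ^ k = 0) (hk' : A ^ (k - 1) ≠ 0)
    (hc : HasComplexStructure A) :
    k ≤ n := by
  rcases Nat.eq_zero_or_pos k with rfl | hk1
  · exact Nat.zero_le n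
  rcases Nat.eq_zero_or_pos n with rfl | hn1
  · haveI : IsEmpty (Fin (2 * 0 - 1)) := by simp; infer_instance
    exact absurd (Subsingleton.elim _ _) hk'
  obtain ⟨j, hsq, hnij⟩ := hc
  set V := (Fin (2 * n - 1) → ℝ) with hV
  set φ : V →ₗ[ℝ] ℝ := (LinearMap.fst ℝ ℝ V) ∘ₗ j ∘ₗ (LinearMap.inr ℝ ℝ V) with hφdef
  set ψ : V →ₗ[ℝ] V := (LinearMap.snd ℝ ℝ V) ∘ₗ j ∘ₗ (LinearMap.inr ℝ ℝ V) with hψdef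
  set a : ℝ := (j (1, 0)).1 with ha
  set w : V := (j (1, 0)).2 with hw
  have hj : ∀ x : ℝ × V, j x = (x.1 * a + φ x.2, x.1 • w + ψ x.2) := by
    intro x
    have hx : x = x.1 • ((1 : ℝ), (0 : V)) + ((0 : ℝ), x.2) := by
      ext <;> simp
    conv_lhs => rw [hx]
    rw [map_add, LinearMap.map_smul]
    have h1 : j ((0 : ℝ), x.2) = (φ x.2, ψ x.2) := rfl
    have h2 : j ((1 : ℝ), (0 : V)) = (a, w) := rfl
    rw [h1, h2, Prod.smul_mk, Prod.mk_add_mk, smul_eq_mul]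
  have hsqc : ∀ v : V, φ v * a + φ (ψ v) = 0 ∧ φ v • w + ψ (ψ v) = -v := by
    intro v
    have h := hsq ((0 : ℝ), v)
    rw [hj ((0 : ℝ), v)] at h
    simp only [zero_mul, zero_add, zero_smul] at h
    rw [hj (φ v, ψ v)] at h
    constructor
    · have h1 := congrArg Prod.fst h
      simpa using h1
    · have h2 := congrArg Prod.snd h
      simpa using h2
  have hC : ∀ u v : V,
      φ (φ u • A.mulVec v - φ v • A.mulVec u) = 0 ∧
      ψ (φ u • A.mulVec v - φ v • A.mulVec u)
        = φ u • A.mulVec (ψ v) - φ v • A.mulVec (ψ u) := by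
    intro u v
    have h := hnij ((0 : ℝ), u) ((0 : ℝ), v)
    rw [hj ((0 : ℝ), u), hj ((0 : ℝ), v)] at h
    simp only [zero_mul, zero_add, zero_smul, aaBracket, Prod.mk_add_mk,
      sub_zero, zero_sub, add_zero] at h
    rw [hj] at h
    simp only [zero_mul, zero_add, zero_smul, ← sub_eq_add_neg] at h
    constructor
    · have h1 := congrArg Prod.fst h
      simpa using h1
    · have h2 := congrArg Prod.snd h
      simpa [sub_eq_zero] using h2
  by_cases hphi0 : φ = 0
  · exfalso
    have hps2 : ∀ v : V, ψ (ψ v) = -v := by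
      intro v
      have h := (hsqc v).2
      rw [hphi0] at h
      simpa using h
    have hev := even_finrank_of_sq_neg_one ψ hps2
    have hfr : finrank ℝ V = 2 * n - 1 := Module.finrank_fin_fun ℝ
    rw [hfr] at hev
    obtain ⟨p, hp⟩ := hev
    omega
  have hex : ∃ m0 : V, φ m0 ≠ 0 := by
    by_contra hne
    push_neg at hne
    exact hphi0 (LinearMap.ext fun v => by simpa using hne v)
  obtain ⟨m0, hm0⟩ := hex
  obtain ⟨m, hm1⟩ : ∃ m : V, φ m = 1 :=
    ⟨(φ m0)⁻¹ • m0, by rw [LinearMap.map_smul, smul_eq_mul, inv_mul_cancel₀ hm0]⟩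
  obtain ⟨c, hcd⟩ : ∃ c : ℝ, c = φ (A.mulVec m) := ⟨_, rfl⟩
  have hphiA' : ∀ v : V, φ (A.mulVec v) = c * φ v := by
    intro v
    have h := (hC m v).1
    rw [map_sub, LinearMap.map_smul, LinearMap.map_smul, hm1] at h
    simp only [one_smul, smul_eq_mul] at h
    rw [hcd]
    linear_combination h
  have hc0 : c = 0 := by
    have hpow : ∀ (r : ℕ) (v : V), φ ((A ^ r).mulVec v) = c ^ r * φ v := by
      intro r
      induction r with
      | zero => intro v; simp
      | succ r ih =>
        intro v
        rw [pow_succ', ← Matrix.mulVec_mulVec, hphiA', ih]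
        ring
    have hkm := hpow k m
    rw [hk, hm1, mul_one] at hkm
    have : c ^ k = 0 := by simpa using hkm.symm
    exact pow_eq_zero_iff (by omega) |>.mp this
  have hphiA : ∀ v : V, φ (A.mulVec v) = 0 := fun v => by
    rw [hphiA', hc0, zero_mul]
  have hcommpsi : ∀ v : V, φ v = 0 → ψ (A.mulVec v) = A.mulVec (ψ v) := by
    intro v hv
    have h := (hC m v).2
    rw [hm1, hv] at h
    simpa using h
  have hpsiker : ∀ v : V, φ v = 0 → φ (ψ v) = 0 := by
    intro v hv
    have h := (hsqc v).1
    rw [hv] at h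
    simpa using h
  have hpsi2ker : ∀ v : V, φ v = 0 → ψ (ψ v) = -v := by
    intro v hv
    have h := (hsqc v).2
    rw [hv] at h
    simpa using h
  classical
  set f : Module.End ℝ V := Matrix.toLinAlgEquiv' A with hfdef
  have hfap : ∀ v : V, f v = A.mulVec v := fun v => rfl
  set W := LinearMap.ker φ with hWdef
  have hAW : ∀ x ∈ W, f x ∈ W := by
    intro x _
    rw [LinearMap.mem_ker, hfap]
    exact hphiA x
  have hpsiW : ∀ x ∈ W, ψ x ∈ W := by
    intro x hx
    rw [LinearMap.mem_ker] at hx ⊢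
    exact hpsiker x hx
  set B := f.restrict hAW with hBdef
  set Ps := ψ.restrict hpsiW with hPsdef
  have hPs2 : ∀ x : W, Ps (Ps x) = -x := by
    intro x
    apply Subtype.ext
    rw [hPsdef, LinearMap.restrict_coe_apply, LinearMap.restrict_coe_apply]
    simpa using hpsi2ker x x.2
  have hBPs : ∀ x : W, B (Ps x) = Ps (B x) := by
    intro x
    apply Subtype.ext
    rw [hBdef, hPsdef, LinearMap.restrict_coe_apply, LinearMap.restrict_coe_apply,
      LinearMap.restrict_coe_apply, LinearMap.restrict_coe_apply, hfap, hfap]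
    exact (hcommpsi x x.2).symm
  have hfk : f ^ k = 0 := by
    rw [hfdef, ← map_pow, hk, map_zero]
  have hBk : B ^ k = 0 := by
    rw [hBdef, Module.End.pow_restrict]
    ext x
    simp [LinearMap.restrict_apply, hfk]
  have hfinW : finrank ℝ W = 2 * n - 2 := by
    have hr := LinearMap.finrank_range_add_finrank_ker φ
    have hrange : LinearMap.range φ = ⊤ := by
      rw [LinearMap.range_eq_top]
      intro r
      exact ⟨r • m, by rw [LinearMap.map_smul, hm1, smul_eq_mul, mul_one]⟩
    rw [hrange, finrank_top] at hr
    have h1 : finrank ℝ ℝ = 1 := Module.finrank_self ℝ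
    have h2 : finrank ℝ V = 2 * n - 1 := Module.finrank_fin_fun ℝ
    rw [h1, h2, ← hWdef] at hr
    omega
  have hBn : B ^ (n - 1) = 0 := by
    apply nilp_pow_half_dim B Ps hPs2 hBPs k hBk
    rw [hfinW]
    omega
  have hfn : f ^ n = 0 := by
    refine LinearMap.ext fun v => ?_
    have hv : f v ∈ W := LinearMap.mem_ker.mpr (by rw [hfap]; exact hphiA v)
    have hx := LinearMap.ext_iff.mp hBn ⟨f v, hv⟩
    rw [hBdef, Module.End.pow_restrict] at hx
    have hx' := congrArg Subtype.val hx
    rw [LinearMap.restrict_coe_apply] at hx'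
    simp only [LinearMap.zero_apply, ZeroMemClass.coe_zero] at hx' ⊢
    have hn2 : f ^ n = f ^ (n - 1) * f := by
      rw [← pow_succ, Nat.sub_add_cancel hn1]
    rw [hn2, Module.End.mul_apply]
    exact hx'
  have hAn : A ^ n = 0 := by
    apply Matrix.toLinAlgEquiv'.injective
    rw [map_pow, map_zero]
    exact hfn
  by_contra hcon
  push_neg at hcon
  apply hk'
  have hsplit : k - 1 = (k - 1 - n) + n := by omega
  rw [hsplit, pow_add, hAn, mul_zero]
end
end

section
/- Let A ∈ M(2n−1,ℝ) satisfy A ≠ 0 and A² = 0 (so that the almost abelian Lie algebra 𝔤_A = ℝe₀ ⋉_A ℝ^{2n−1} is 2-step nilpotent). Then 𝔤_A admits a complex structure. -/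
/-!
Since `A² = 0`, the image of `A` lies in its kernel, so `ℝ^d` has a basis `uᵢ, A uᵢ, w_k` in
which the `A uᵢ` and `w_k` span `ker A`. Given `u`, a functional `φ` with `φ u = 1` and
`φ ∘ A = 0`, and `J` with `J u = 0` that is a complex structure on `ker φ`, put `j e₀ = u` and
`j v = J v - φ(v) e₀`: the Nijenhuis tensor of `j` vanishes as soon as `[A, J] = φ ⊗ c` for some
`c`, because the terms coming from `[A, J]` are then symmetric in the two arguments.

As `d` is odd, `dim ker A - rank A` is odd. If `rank A` is even, take `u` among the `w_k` and
let `J` rotate the remaining basis vectors in pairs, compatibly with `A`, so that `[A, J] = 0`.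
If `rank A` is odd, take `u = u₀` and let `J` rotate `A u₀` into a spare `w₀`; then
`[A, J] = -φ ⊗ w₀`.
-/

open Matrix Module

noncomputable section

def almostAbelianJ {ι : Type*} [Fintype ι] (u : ι → ℝ) (φ : (ι → ℝ) →ₗ[ℝ] ℝ)
    (J : Module.End ℝ (ι → ℝ)) : Module.End ℝ (ℝ × (ι → ℝ)) :=
  (-(φ ∘ₗ LinearMap.snd ℝ ℝ _)).prod ((LinearMap.fst ℝ ℝ _).smulRight u + J ∘ₗ LinearMap.snd ℝ ℝ _)

@[simp]
theorem almostAbelianJ_apply {ι : Type*} [Fintype ι] (u : ι → ℝ) (φ : (ι → ℝ) →ₗ[ℝ] ℝ)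
    (J : Module.End ℝ (ι → ℝ)) (x : ℝ × (ι → ℝ)) :
    almostAbelianJ u φ J x = (-φ x.2, x.1 • u + J x.2) := rfl

theorem hasComplexStructure_of_hyperplane {ι : Type*} [Fintype ι] (A : Matrix ι ι ℝ)
    (u c : ι → ℝ) (φ : (ι → ℝ) →ₗ[ℝ] ℝ) (J : Module.End ℝ (ι → ℝ))
    (hφu : φ u = 1) (hJu : J u = 0) (hφJ : φ ∘ₗ J = 0)
    (hJJ : J ∘ₗ J = φ.smulRight u - 1) (hφA : φ ∘ₗ A.mulVecLin = 0)
    (hAJ : A.mulVecLin ∘ₗ J - J ∘ₗ A.mulVecLin = φ.smulRight c) :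
    HasComplexStructure A := by
  have hφJ' (v) : φ (J v) = 0 := LinearMap.congr_fun hφJ v
  have hJJ' (v) : J (J v) = φ v • u - v := LinearMap.congr_fun hJJ v
  have hφA' (v) : φ (A *ᵥ v) = 0 := LinearMap.congr_fun hφA v
  have hJA (v) : J (A *ᵥ v) = A *ᵥ J v - φ v • c := by
    have h : A *ᵥ J v - J (A *ᵥ v) = φ v • c := LinearMap.congr_fun hAJ v
    rw [← h, sub_sub_cancel]
  refine ⟨almostAbelianJ u φ J, fun ⟨t, v⟩ => ?_, fun ⟨t, v⟩ ⟨s, w⟩ => ?_⟩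
  · simp [hφu, hJu, hφJ', hJJ', neg_add_eq_sub]
  · simp only [aaBracket, almostAbelianJ_apply, Prod.mk_add_mk, Prod.mk_sub_mk, Prod.ext_iff]
    refine ⟨by simp [hφA'], ?_⟩
    simp only [Prod.snd_zero, mulVec_add, mulVec_sub, mulVec_smul, map_add, map_sub,
      map_smul, hJA, hJJ', hφJ']
    module

open LinearMap Submodule in
theorem exists_basis_of_range_le_ker {K V : Type*} [DivisionRing K] [AddCommGroup V] [Module K V]
    [FiniteDimensional K V] (f : V →ₗ[K] V) (hf : range f ≤ ker f) {ι κ : Type*} [Fintype ι]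
    [Fintype κ] (hι : Fintype.card ι = finrank K (range f))
    (hκ : Fintype.card ι + Fintype.card κ = finrank K (ker f)) :
    ∃ E : Basis (ι ⊕ ι ⊕ κ) K V,
      (∀ i, f (E (.inl i)) = E (.inr (.inl i))) ∧ ∀ k, f (E (.inr k)) = 0 := by
  obtain ⟨U, hU⟩ := (ker f).exists_isCompl
  let g : U →ₗ[K] ker f := (f ∘ₗ U.subtype).codRestrict (ker f) fun x => hf (mem_range_self f x)
  have hg : Function.Injective g := by
    rw [← ker_eq_bot, ker_codRestrict, ker_comp, ← disjoint_iff_comap_eq_bot]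
    exact hU.symm.disjoint
  let eg := LinearEquiv.ofInjective g hg
  obtain ⟨W, hW⟩ := (range g).exists_isCompl
  have hU_rank : finrank K U = Fintype.card ι := by
    have := f.finrank_range_add_finrank_ker
    have := finrank_add_eq_of_isCompl hU
    omega
  have hW_rank : finrank K W = Fintype.card κ := by
    have := eg.finrank_eq
    have := finrank_add_eq_of_isCompl hW
    omega
  let bU : Basis ι K U := (finBasisOfFinrankEq K U hU_rank).reindex (Fintype.equivFin ι).symm
  let bW : Basis κ K W := (finBasisOfFinrankEq K W hW_rank).reindex (Fintype.equivFin κ).symm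
  let bker : Basis (ι ⊕ κ) K (ker f) := ((bU.map eg).prod bW).map (prodEquivOfIsCompl _ _ hW)
  refine ⟨(bU.prod bker).map (prodEquivOfIsCompl _ _ hU.symm), fun i => ?_, fun k => ?_⟩
  · simp [bker, eg, g]
  · simp [bker]

-- `.inl i` indexes the `uᵢ`, `.inr (.inl i)` the `A uᵢ` and `.inr (.inr k)` the `w_k`;
-- `J` maps `(j, false) ↦ (j, true) ↦ -(j, false)`.
def oddRankJ {V σ τ : Type*} [AddCommGroup V] [Module ℝ V]
    (E : Basis ((Unit ⊕ σ × Bool) ⊕ (Unit ⊕ σ × Bool) ⊕ (Unit ⊕ τ × Bool)) ℝ V) :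
    (Unit ⊕ σ × Bool) ⊕ (Unit ⊕ σ × Bool) ⊕ (Unit ⊕ τ × Bool) → V
  | .inl (.inl _) => 0
  | .inl (.inr (j, false)) => E (.inl (.inr (j, true)))
  | .inl (.inr (j, true)) => -E (.inl (.inr (j, false)))
  | .inr (.inl (.inl _)) => E (.inr (.inr (.inl ())))
  | .inr (.inl (.inr (j, false))) => E (.inr (.inl (.inr (j, true))))
  | .inr (.inl (.inr (j, true))) => -E (.inr (.inl (.inr (j, false))))
  | .inr (.inr (.inl _)) => -E (.inr (.inl (.inl ())))
  | .inr (.inr (.inr (j, false))) => E (.inr (.inr (.inr (j, true))))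
  | .inr (.inr (.inr (j, true))) => -E (.inr (.inr (.inr (j, false))))

theorem hasComplexStructure_of_oddRank_basis {ι σ τ : Type*} [Fintype ι] (A : Matrix ι ι ℝ)
    (E : Basis ((Unit ⊕ σ × Bool) ⊕ (Unit ⊕ σ × Bool) ⊕ (Unit ⊕ τ × Bool)) ℝ (ι → ℝ))
    (hE₁ : ∀ i, A *ᵥ E (.inl i) = E (.inr (.inl i)))
    (hE₂ : ∀ k, A *ᵥ E (.inr k) = 0) :
    HasComplexStructure A := by
  classical
  set J := E.constr ℝ (oddRankJ E)
  have hJ (i) : J (E i) = oddRankJ E i := E.constr_basis ℝ _ i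
  refine hasComplexStructure_of_hyperplane A (E (.inl (.inl ()))) (-E (.inr (.inr (.inl ()))))
    (E.coord (.inl (.inl ()))) J ?_ ?_ ?_ ?_ ?_ ?_
  · simp
  · simp [hJ, oddRankJ]
  all_goals
    refine E.ext fun i => ?_
    rcases i with ((_ | ⟨j, _ | _⟩) | (_ | ⟨j, _ | _⟩) | (_ | ⟨j, _ | _⟩)) <;>
      simp [hJ, oddRankJ, hE₁, hE₂, mulVec_neg]

def evenRankJ {V σ τ : Type*} [AddCommGroup V] [Module ℝ V]
    (E : Basis ((σ × Bool) ⊕ (σ × Bool) ⊕ (Unit ⊕ τ × Bool)) ℝ V) :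
    (σ × Bool) ⊕ (σ × Bool) ⊕ (Unit ⊕ τ × Bool) → V
  | .inl (j, false) => E (.inl (j, true))
  | .inl (j, true) => -E (.inl (j, false))
  | .inr (.inl (j, false)) => E (.inr (.inl (j, true)))
  | .inr (.inl (j, true)) => -E (.inr (.inl (j, false)))
  | .inr (.inr (.inl _)) => 0
  | .inr (.inr (.inr (j, false))) => E (.inr (.inr (.inr (j, true))))
  | .inr (.inr (.inr (j, true))) => -E (.inr (.inr (.inr (j, false))))

theorem hasComplexStructure_of_evenRank_basis {ι σ τ : Type*} [Fintype ι] (A : Matrix ι ι ℝ)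
    (E : Basis ((σ × Bool) ⊕ (σ × Bool) ⊕ (Unit ⊕ τ × Bool)) ℝ (ι → ℝ))
    (hE₁ : ∀ i, A *ᵥ E (.inl i) = E (.inr (.inl i)))
    (hE₂ : ∀ k, A *ᵥ E (.inr k) = 0) :
    HasComplexStructure A := by
  classical
  set J := E.constr ℝ (evenRankJ E)
  have hJ (i) : J (E i) = evenRankJ E i := E.constr_basis ℝ _ i
  refine hasComplexStructure_of_hyperplane A (E (.inr (.inr (.inl ())))) 0
    (E.coord (.inr (.inr (.inl ())))) J ?_ ?_ ?_ ?_ ?_ ?_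
  · simp
  · simp [hJ, evenRankJ]
  all_goals
    refine E.ext fun i => ?_
    rcases i with (⟨j, _ | _⟩ | ⟨j, _ | _⟩ | (_ | ⟨j, _ | _⟩)) <;>
      simp [hJ, evenRankJ, hE₁, hE₂, mulVec_neg]

theorem hasComplexStructure_of_sq_eq_zero {ι : Type*} [Fintype ι] [DecidableEq ι]
    (A : Matrix ι ι ℝ) (hA2 : A ^ 2 = 0) (hι : Odd (Fintype.card ι)) :
    HasComplexStructure A := by
  have hf : LinearMap.range A.mulVecLin ≤ LinearMap.ker A.mulVecLin := by
    rintro _ ⟨v, rfl⟩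
    simp [mulVec_mulVec, ← sq, hA2]
  set r := finrank ℝ (LinearMap.range A.mulVecLin)
  set k := finrank ℝ (LinearMap.ker A.mulVecLin)
  have hrk : r + k = Fintype.card ι := by
    rw [A.mulVecLin.finrank_range_add_finrank_ker, finrank_fintype_fun_eq_card]
  have hle : r ≤ k := Submodule.finrank_mono hf
  obtain ⟨t, ht⟩ : ∃ t, k = r + (2 * t + 1) := by
    obtain ⟨m, hm⟩ := hι
    exact ⟨(k - r) / 2, by omega⟩
  obtain ⟨s, hs | hs⟩ := Nat.even_or_odd' r
  · obtain ⟨E, hE₁, hE₂⟩ := exists_basis_of_range_le_ker A.mulVecLin hf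
      (ι := Fin s × Bool) (κ := Unit ⊕ Fin t × Bool) (by simp; omega) (by simp; omega)
    exact hasComplexStructure_of_evenRank_basis A E hE₁ hE₂
  · obtain ⟨E, hE₁, hE₂⟩ := exists_basis_of_range_le_ker A.mulVecLin hf
      (ι := Unit ⊕ Fin s × Bool) (κ := Unit ⊕ Fin t × Bool) (by simp; omega)
      (by simp; omega)
    exact hasComplexStructure_of_oddRank_basis A E hE₁ hE₂

/-- If `A ∈ M(2n-1,ℝ)` satisfies `A ≠ 0` and `A² = 0` (so `𝔤_A`
is 2-step nilpotent), then `𝔤_A` admits a complex structure. -/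
theorem stmt8 (n : ℕ)
    (A : Matrix (Fin (2 * n - 1)) (Fin (2 * n - 1)) ℝ)
    (hA : A ≠ 0) (hA2 : A ^ 2 = 0) :
    HasComplexStructure A := by
  have hn : n ≠ 0 := by
    rintro rfl
    exact hA (Matrix.ext fun i => i.elim0)
  exact hasComplexStructure_of_sq_eq_zero A hA2 ⟨n - 1, by simp; omega⟩
end
end

section
/- Let M = 𝒥₅ ⊕ 𝒥₃ ⊕ 0₁ ∈ M(9,ℝ). Then the 10-dimensional almost abelian Lie algebra 𝔤_M = ℝe₀ ⋉_M ℝ^9 does not admit any symplectic structure. -/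
open Matrix Module

noncomputable section

/-!
Write e₀, …, e₄ and f₀, f₁, f₂ for the standard basis vectors of the 𝒥₅ and 𝒥₃ blocks, so that
M eᵢ = eᵢ₊₁ and M fᵢ = fᵢ₊₁. Restricting a symplectic form ω to the abelian ideal ℝ⁹ gives an
alternating form Ω for which M is skew-adjoint; since ℝ⁹ is a hyperplane, nondegeneracy of ω leaves
Ω a radical of dimension at most one. Yet the radical contains two independent vectors. One is
e₄ = M⁴e₀: indeed M⁴w = w₀e₄, and Ω(e₀, M⁴e₀) = Ω(M²e₀, M²e₀) = 0. For the other, Ω(·, M²·) is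
alternating, hence degenerate on the odd-dimensional span of e₀, e₁, f₀; a nonzero u in its kernel
there gives M²u in the radical, because the image of M² lies in M²⟨e₀, e₁, f₀⟩ + ℝe₄.
-/

namespace LinearMap

section AdjointPair

variable {R M : Type*} [CommRing R] [AddCommGroup M] [Module R M] {B : M →ₗ[R] M →ₗ[R] R}

theorem IsAdjointPair.pow {f g : Module.End R M} (h : IsAdjointPair B B f g) (n : ℕ) :
    IsAdjointPair B B ⇑(f ^ n) ⇑(g ^ n) := by
  induction n with
  | zero => exact isAdjointPair_one
  | succ n ih => rw [pow_succ, pow_succ']; exact ih.mul h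

theorem IsAdjointPair.pow_of_even {f : Module.End R M} (h : IsAdjointPair B B f ⇑(-f)) {n : ℕ}
    (hn : Even n) : IsAdjointPair B B ⇑(f ^ n) ⇑(f ^ n) := by
  simpa [hn.neg_pow] using h.pow n

theorem IsAlt.compl₂_sq (hB : B.IsAlt) {f : Module.End R M} (hf : IsAdjointPair B B f ⇑(-f)) :
    (B.compl₂ (f ^ 2)).IsAlt := fun x => by
  have := hf x (f x)
  rw [hB] at this
  simpa [sq, eq_comm] using this

end AdjointPair

theorem IsAlt.exists_ne_zero_apply_sum_eq_zero {K V ι : Type*} [Field K] [CharZero K]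
    [AddCommGroup V] [Module K V] [Fintype ι] {B : V →ₗ[K] V →ₗ[K] K} (hB : B.IsAlt)
    (hι : Odd (Fintype.card ι)) (x : ι → V) :
    ∃ c : ι → K, c ≠ 0 ∧ ∀ i, B (∑ j, c j • x j) (x i) = 0 := by
  classical
  set G : Matrix ι ι K := Matrix.of fun i j => B (x i) (x j)
  have hG : Gᵀ = -G := by
    ext i j
    simp [G, hB.neg]
  have hdet : G.det = 0 := by
    have := congrArg Matrix.det hG
    rw [Matrix.det_transpose, Matrix.det_neg, hι.neg_one_pow, neg_one_mul] at this
    exact self_eq_neg.mp this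
  obtain ⟨c, hc, hcG⟩ := Matrix.exists_vecMul_eq_zero_iff.mpr hdet
  refine ⟨c, hc, fun i => ?_⟩
  simpa [Matrix.vecMul, dotProduct, G, map_sum] using congrFun hcG i

end LinearMap

open LinearMap (BilinForm IsAdjointPair)

theorem HasSymplecticStructure.exists_bilinForm {ι : Type*} [Fintype ι] [DecidableEq ι]
    {A : Matrix ι ι ℝ} (h : HasSymplecticStructure A) :
    ∃ Ω : BilinForm ℝ (ι → ℝ), Ω.IsAlt ∧ IsAdjointPair Ω Ω (toLin' A) ⇑(-toLin' A) ∧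
      finrank ℝ (LinearMap.ker Ω) ≤ 1 := by
  obtain ⟨ω, halt, hnd, hcl⟩ := h
  let incl := LinearMap.inr ℝ ℝ (ι → ℝ)
  refine ⟨ω.compl₁₂ incl incl, fun v => halt _, fun v w => ?_, ?_⟩
  · have hclosed := hcl (1, 0) (0, v) (0, w)
    have hskew := LinearMap.IsAlt.neg (B := ω) halt (0, v) (0, -(A *ᵥ w))
    simp only [aaBracket, one_smul, mulVec_zero, smul_zero, sub_zero, zero_smul, sub_self,
      zero_sub, Prod.mk_zero_zero, map_zero, LinearMap.zero_apply, add_zero] at hclosed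
    simp only [toLin'_apply, LinearMap.compl₁₂_apply, LinearMap.coe_inr, LinearMap.neg_apply, incl]
    linarith
  · let φ : LinearMap.ker (ω.compl₁₂ incl incl) →ₗ[ℝ] ℝ :=
      ω.flip (1, 0) ∘ₗ incl ∘ₗ (LinearMap.ker _).subtype
    have hφ : Function.Injective φ := by
      rw [← LinearMap.ker_eq_bot, LinearMap.ker_eq_bot']
      rintro ⟨v, hv⟩ hφv
      have hv' : ∀ w, ω (0, v) (0, w) = 0 := fun w => LinearMap.congr_fun hv w
      have : ((0 : ℝ), v) = 0 := hnd _ fun y => by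
        have hy : y = y.1 • ((1 : ℝ), (0 : ι → ℝ)) + (0, y.2) := by ext <;> simp
        rw [hy, map_add, map_smul]
        simp only [LinearMap.coe_comp, LinearMap.coe_inr, Submodule.coe_subtype,
          Function.comp_apply, LinearMap.flip_apply, incl, φ] at hφv
        simp [hφv, hv']
      simpa using this
    simpa using LinearMap.finrank_le_finrank_of_injective hφ

theorem LinearMap.IsAdjointPair.apply_mulVec_pow_of_even {R ι : Type*} [CommRing R] [Fintype ι]
    [DecidableEq ι] {A : Matrix ι ι R} {B : BilinForm R (ι → R)}
    (hA : IsAdjointPair B B (toLin' A) ⇑(-toLin' A)) {n : ℕ} (hn : Even n) (x y : ι → R) :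
    B (A ^ n *ᵥ x) y = B x (A ^ n *ᵥ y) := by
  simpa [← toLin'_pow] using hA.pow_of_even hn x y

section Jordan531

abbrev ι₉ := Fin 5 ⊕ (Fin 3 ⊕ Fin 1)

def jordan531 : Matrix ι₉ ι₉ ℝ :=
  fromBlocks (jordanBlock 5) 0 0 (fromBlocks (jordanBlock 3) 0 0 (0 : Matrix (Fin 1) (Fin 1) ℝ))

local notation "𝐞" i => (Pi.single (Sum.inl i) 1 : ι₉ → ℝ)
local notation "𝐟" i => (Pi.single (Sum.inr (Sum.inl i)) 1 : ι₉ → ℝ)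

theorem jordan531_sq_mulVec (w : ι₉ → ℝ) :
    jordan531 ^ 2 *ᵥ w =
      w (.inl 0) • (𝐞 2) + w (.inl 1) • (𝐞 3) + w (.inl 2) • (𝐞 4) + w (.inr (.inl 0)) • (𝐟 2) := by
  rw [sq, ← mulVec_mulVec]
  ext (i | i | i) <;> fin_cases i <;>
    simp [jordan531, jordanBlock, mulVec, dotProduct, Fin.sum_univ_succ]

theorem jordan531_pow_four_mulVec (w : ι₉ → ℝ) : jordan531 ^ 4 *ᵥ w = w (.inl 0) • (𝐞 4) := by
  rw [show jordan531 ^ 4 = jordan531 ^ 2 * jordan531 ^ 2 by rw [← pow_add], ← mulVec_mulVec,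
    jordan531_sq_mulVec, jordan531_sq_mulVec]
  simp

variable {Ω : BilinForm ℝ (ι₉ → ℝ)}

theorem single_inl_four_mem_ker (hΩ : Ω.IsAlt)
    (hA : IsAdjointPair Ω Ω (toLin' jordan531) ⇑(-toLin' jordan531)) :
    (𝐞 4) ∈ LinearMap.ker Ω := by
  have h₀₄ : Ω (𝐞 0) (𝐞 4) = 0 := by
    have := hA.apply_mulVec_pow_of_even even_two (𝐞 0) (𝐞 2)
    rw [jordan531_sq_mulVec, jordan531_sq_mulVec] at this
    simpa [hΩ.self_eq_zero, eq_comm] using this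
  refine LinearMap.ext fun w => ?_
  have := hA.apply_mulVec_pow_of_even (n := 4) (by decide) (𝐞 0) w
  rw [jordan531_pow_four_mulVec, jordan531_pow_four_mulVec] at this
  simpa [h₀₄] using this

theorem exists_ne_zero_combination_mem_ker (hΩ : Ω.IsAlt)
    (hA : IsAdjointPair Ω Ω (toLin' jordan531) ⇑(-toLin' jordan531)) :
    ∃ c : Fin 3 → ℝ, c ≠ 0 ∧ c 0 • (𝐞 2) + c 1 • (𝐞 3) + c 2 • (𝐟 2) ∈ LinearMap.ker Ω := by
  obtain ⟨c, hc, hcB⟩ := (hΩ.compl₂_sq hA).exists_ne_zero_apply_sum_eq_zero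
    (by decide : Odd (Fintype.card (Fin 3))) ![𝐞 0, 𝐞 1, 𝐟 0]
  set u := ∑ j, c j • ![𝐞 0, 𝐞 1, 𝐟 0] j
  have hMu : jordan531 ^ 2 *ᵥ u = c 0 • (𝐞 2) + c 1 • (𝐞 3) + c 2 • (𝐟 2) := by
    simp [u, jordan531_sq_mulVec, Fin.sum_univ_three]
  have hue₂ : Ω u (𝐞 2) = 0 := by
    simpa [← toLin'_pow, ↓jordan531_sq_mulVec] using hcB 0
  have hue₃ : Ω u (𝐞 3) = 0 := by
    simpa [← toLin'_pow, ↓jordan531_sq_mulVec] using hcB 1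
  have huf₂ : Ω u (𝐟 2) = 0 := by
    simpa [← toLin'_pow, ↓jordan531_sq_mulVec] using hcB 2
  have hue₄ : Ω u (𝐞 4) = 0 :=
    hΩ.eq_iff.mp (LinearMap.congr_fun (single_inl_four_mem_ker hΩ hA) u)
  refine ⟨c, hc, hMu ▸ ?_⟩
  refine LinearMap.ext fun w => ?_
  rw [hA.apply_mulVec_pow_of_even even_two, jordan531_sq_mulVec]
  simp [hue₂, hue₃, huf₂, hue₄]

theorem two_le_finrank_ker (hΩ : Ω.IsAlt)
    (hA : IsAdjointPair Ω Ω (toLin' jordan531) ⇑(-toLin' jordan531)) :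
    2 ≤ finrank ℝ (LinearMap.ker Ω) := by
  obtain ⟨c, hc, hv⟩ := exists_ne_zero_combination_mem_ker hΩ hA
  set v := c 0 • (𝐞 2) + c 1 • (𝐞 3) + c 2 • (𝐟 2)
  have hind : LinearIndependent ℝ ![𝐞 4, v] := by
    refine LinearIndependent.pair_iff.mpr fun s t hst => ?_
    obtain rfl : s = 0 := by simpa [v] using congrFun hst (.inl 4)
    refine ⟨rfl, by_contra fun ht => hc ?_⟩
    ext i
    fin_cases i
    · simpa [v, ht] using congrFun hst (.inl 2)
    · simpa [v, ht] using congrFun hst (.inl 3)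
    · simpa [v, ht] using congrFun hst (.inr (.inl 2))
  calc 2 = finrank ℝ (Submodule.span ℝ (Set.range ![𝐞 4, v])) := by
        simp [finrank_span_eq_card hind]
    _ ≤ finrank ℝ (LinearMap.ker Ω) := by
        refine Submodule.finrank_mono (Submodule.span_le.mpr ?_)
        simp [Set.insert_subset_iff, single_inl_four_mem_ker hΩ hA, hv]

end Jordan531

/-- The 10-dimensional almost abelian Lie algebra `𝔤_M` with
`M = 𝒥₅ ⊕ 𝒥₃ ⊕ 0₁ ∈ M(9,ℝ)` does not admit any symplectic structure. -/
theorem stmt14 :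
    ¬ HasSymplecticStructure
        (Matrix.fromBlocks (jordanBlock 5) 0 0
          (Matrix.fromBlocks (jordanBlock 3) 0 0
            (0 : Matrix (Fin 1) (Fin 1) ℝ))) := by
  intro h
  obtain ⟨Ω, hΩ, hA, hker⟩ := HasSymplecticStructure.exists_bilinForm (A := jordan531) h
  have := two_le_finrank_ker hΩ hA
  omega
end
end

section
/- Let k ≥ 5 be odd and let A ∈ M(2n−1,ℝ) be nilpotent with A^k = 0 and A^{k−1} ≠ 0 (so that 𝔤_A = ℝe₀ ⋉_A ℝ^{2n−1} is a k-step nilpotent almost abelian Lie algebra). If dim 𝔤_A = 2n ≤ k + 3, then 𝔤_A admits a symplectic structure. -/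
/-!
Write `f` for `A` acting on `V = ℝ^{2n-1}`. For `φ ∈ V*` and an alternating form `B` on `V` for
which `f` is skew, `e⁰ ∧ φ + B` is automatically closed on `𝔤_A`; the work is to make it
non-degenerate.

Choose `v₀` with `f^{k-1} v₀ ≠ 0` and `φ` with `φ (f^j v₀) = δ_{j,k-1}`. Because `k` is odd, the
Hankel form `Σ_{i+j=k} (-1)^i φ(f^i x) φ(f^j y)` is alternating and `f`-skew, and it pairs
`f^m v₀` with `φ ∘ f^{m+1}`; this controls `e₀` and the cyclic subspace `W` spanned by the
`f^j v₀`. Since `dim 𝔤_A` is even and at most `k + 3`, the annihilator `W⁰ ⊆ V*` has dimension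
`0` or `2`. In the latter case the transpose of `f` is nilpotent on `W⁰`, so `W⁰` has a basis
`ψ₂, ψ₁` with `ψ₁ ∘ f = 0` and `ψ₂ ∘ f = c ψ₁`, and `ψ₁ ∧ ψ₂` is an `f`-skew form with radical
`W` that supplies the missing directions.
-/

open Matrix Module

noncomputable section

open Finset

theorem Module.End.dualMap_pow {R M : Type*} [CommSemiring R] [AddCommMonoid M] [Module R M]
    (f : Module.End R M) (n : ℕ) : f.dualMap ^ n = (f ^ n).dualMap := by
  induction n with
  | zero => rfl
  | succ n ih =>
    rw [pow_succ, ih, pow_succ', Module.End.mul_eq_comp, Module.End.mul_eq_comp,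
      LinearMap.dualMap_comp_dualMap]

section LinearAlgebra

variable {K V : Type*} [Field K] [AddCommGroup V] [Module K V]

theorem Module.End.linearIndependent_pow_apply {f : Module.End K V} {v : V} {m : ℕ}
    (h : (f ^ m) v ≠ 0) (h' : (f ^ (m + 1)) v = 0) :
    LinearIndependent K fun i : Fin (m + 1) => (f ^ (i : ℕ)) v := by
  induction m generalizing v with
  | zero => simpa [linearIndependent_unique_iff] using h
  | succ m ih =>
    rw [← Fin.cons_self_tail (fun i : Fin (m + 2) => (f ^ (i : ℕ)) v), linearIndependent_finCons]
    have htail : Fin.tail (fun i : Fin (m + 2) => (f ^ (i : ℕ)) v) =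
        fun i : Fin (m + 1) => (f ^ (i : ℕ)) (f v) := by
      ext i : 1
      simp [Fin.tail, pow_succ, Module.End.mul_apply]
    rw [htail]
    refine ⟨ih (by rwa [← Module.End.mul_apply, ← pow_succ]) (by
      rwa [← Module.End.mul_apply, ← pow_succ]), fun hv => ?_⟩
    have hker : Submodule.span K (Set.range fun i : Fin (m + 1) => (f ^ (i : ℕ)) (f v)) ≤
        LinearMap.ker (f ^ (m + 1)) := by
      rw [Submodule.span_le]
      rintro _ ⟨i, rfl⟩
      rw [SetLike.mem_coe, LinearMap.mem_ker, ← Module.End.mul_apply, ← pow_add,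
        ← Module.End.mul_apply, ← pow_succ]
      exact Module.End.pow_map_zero_of_le (by omega) h'
    exact h (hker (by simpa using hv))

theorem LinearIndependent.exists_dual_apply_eq_ite {ι : Type*} [DecidableEq ι] {e : ι → V}
    (he : LinearIndependent K e) (i₀ : ι) :
    ∃ φ : Dual K V, ∀ i, φ (e i) = if i = i₀ then 1 else 0 := by
  obtain ⟨φ, hφ⟩ := LinearMap.exists_extend ((Basis.span he).coord i₀)
  refine ⟨φ, fun i => ?_⟩
  have := LinearMap.congr_fun hφ (Basis.span he i)
  rwa [LinearMap.comp_apply, Submodule.subtype_apply, Basis.coe_span_apply, Basis.coord_apply,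
    Basis.repr_self, Finsupp.single_apply] at this

theorem Module.End.exists_dual_pow_apply_eq_ite {f : Module.End K V} {k : ℕ} (hf : f ^ k = 0)
    (hf' : f ^ (k - 1) ≠ 0) :
    ∃ (v₀ : V) (φ : Dual K V), ∀ j, φ ((f ^ j) v₀) = if j = k - 1 then 1 else 0 := by
  obtain ⟨v₀, hv₀⟩ : ∃ v, (f ^ (k - 1)) v ≠ 0 := by
    by_contra! h
    exact hf' (LinearMap.ext h)
  have hk : k - 1 + 1 = k := by
    rcases k with _ | k
    · exact absurd hf hf'
    · rfl
  obtain ⟨φ, hφ⟩ := (linearIndependent_pow_apply hv₀ (by rw [hk, hf]; rfl)).exists_dual_apply_eq_ite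
    (Fin.last (k - 1))
  refine ⟨v₀, φ, fun j => ?_⟩
  rcases lt_or_ge j k with hj | hj
  · simpa [Fin.ext_iff] using hφ ⟨j, by omega⟩
  · rw [Module.End.pow_map_zero_of_le hj (by rw [hf]; rfl), map_zero, if_neg (by omega)]

theorem Module.End.exists_basis_of_isNilpotent_of_finrank_eq_two {g : Module.End K V}
    (hg : IsNilpotent g) (hV : finrank K V = 2) :
    ∃ (b : Basis (Fin 2) K V) (c : K), g (b 0) = c • b 1 ∧ g (b 1) = 0 := by
  have : Module.Finite K V := Module.finite_of_finrank_pos (by omega)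
  have hg2 : g ^ 2 = 0 := by
    simpa [hg.charpoly_eq_X_pow_finrank, hV] using g.aeval_self_charpoly
  by_cases h : ∀ v, g v = 0
  · exact ⟨finBasisOfFinrankEq K V hV, 0, by simp [h], h _⟩
  obtain ⟨v, hv⟩ := not_forall.1 h
  have hli := linearIndependent_pow_apply (m := 1) (by simpa using hv) (by simp [hg2])
  refine ⟨basisOfLinearIndependentOfCardEqFinrank hli (by simp [hV]), 1, ?_, ?_⟩
  · simp
  · simp [← Module.End.mul_apply, ← sq, hg2]

end LinearAlgebra

section HankelForm

variable {R V : Type*} [CommRing R] [AddCommGroup V] [Module R V]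

def hankelForm (f : Module.End R V) (φ : Dual R V) (k : ℕ) : LinearMap.BilinForm R V :=
  ∑ p ∈ antidiagonal k, (-1 : R) ^ p.1 • (φ ∘ₗ f ^ p.1).smulRight (φ ∘ₗ f ^ p.2)

variable {f : Module.End R V} {φ : Dual R V} {k : ℕ}

theorem hankelForm_apply (x y : V) :
    hankelForm f φ k x y =
      ∑ p ∈ antidiagonal k, (-1) ^ p.1 * (φ ((f ^ p.1) x) * φ ((f ^ p.2) y)) := by
  simp [hankelForm]

theorem neg_one_pow_eq_neg_of_odd_add {i j : ℕ} (h : Odd (i + j)) :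
    (-1 : R) ^ j = -(-1) ^ i := by
  rcases Nat.even_or_odd i with hi | hi
  · rw [hi.neg_one_pow, ((Nat.odd_add'.1 h).2 hi).neg_one_pow]
  · rw [hi.neg_one_pow, ((Nat.odd_add.1 h).1 hi).neg_one_pow, neg_neg]

theorem hankelForm_apply_self (hk : Odd k) (x : V) : hankelForm f φ k x x = 0 := by
  rw [hankelForm_apply]
  refine sum_involution (fun p _ => p.swap) (fun p hp => ?_) (fun p hp _ h => ?_)
    (fun p hp => HasAntidiagonal.swap_mem_antidiagonal.2 hp) (fun p _ => p.swap_swap)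
  · rw [HasAntidiagonal.mem_antidiagonal] at hp
    rw [Prod.fst_swap, Prod.snd_swap, neg_one_pow_eq_neg_of_odd_add (i := p.1) (j := p.2) (hp ▸ hk)]
    ring
  · rw [HasAntidiagonal.mem_antidiagonal] at hp
    have hswap : p.2 = p.1 := congrArg Prod.fst h
    obtain ⟨r, hr⟩ := hk
    omega

theorem hankelForm_map_add_map (hf : f ^ (k + 1) = 0) (x y : V) :
    hankelForm f φ k (f x) y + hankelForm f φ k x (f y) = 0 := by
  -- both terms are the alternating sum over `i + j = k + 1`, shifted in one of the indices
  set T := ∑ p ∈ antidiagonal (k + 1), (-1 : R) ^ p.1 * (φ ((f ^ p.1) x) * φ ((f ^ p.2) y))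
  have h₁ : T = -hankelForm f φ k (f x) y := by
    simp [T, Nat.sum_antidiagonal_succ, hankelForm_apply, hf, pow_succ, Module.End.mul_apply]
  have h₂ : T = hankelForm f φ k x (f y) := by
    simp [T, Nat.sum_antidiagonal_succ', hankelForm_apply, hf, pow_succ, Module.End.mul_apply]
  linear_combination h₁ - h₂

theorem hankelForm_apply_pow_apply {v₀ : V}
    (hφ : ∀ j, φ ((f ^ j) v₀) = if j = k - 1 then 1 else 0) {m : ℕ} (hm : m < k) (v : V) :
    hankelForm f φ k v ((f ^ m) v₀) = (-1) ^ (m + 1) * φ ((f ^ (m + 1)) v) := by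
  simp_rw [hankelForm_apply, ← Module.End.mul_apply, ← pow_add, hφ]
  rw [sum_eq_single (m + 1, k - 1 - m)]
  · rw [if_pos (by omega), mul_one]
  · intro p hp hne
    rw [HasAntidiagonal.mem_antidiagonal] at hp
    rw [if_neg, mul_zero, mul_zero]
    intro h
    exact hne (Prod.ext (by omega) (by omega))
  · intro h
    exact absurd (HasAntidiagonal.mem_antidiagonal.2 (by omega)) h

end HankelForm

section CyclicComplement

variable {K V : Type*} [Field K] [AddCommGroup V] [Module K V]
  {f : Module.End K V} {φ : Dual K V} {v₀ : V} {k : ℕ}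

theorem ne_zero_of_pow_apply_eq_ite (hf : f ^ k = 0)
    (hφ : ∀ j, φ ((f ^ j) v₀) = if j = k - 1 then 1 else 0) : k ≠ 0 := by
  rintro rfl
  have := hφ 0
  rw [hf] at this
  simp at this

theorem eq_zero_of_mem_span_pow_apply (hφ : ∀ j, φ ((f ^ j) v₀) = if j = k - 1 then 1 else 0)
    {v : V} (hv : v ∈ Submodule.span K (Set.range fun j : Fin k => (f ^ (j : ℕ)) v₀))
    (h : ∀ m, φ ((f ^ m) v) = 0) : v = 0 := by
  obtain ⟨c, rfl⟩ := (Submodule.mem_span_range_iff_exists_fun K).1 hv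
  suffices c = 0 by simp [this]
  ext ⟨j, hj⟩
  have hc := h (k - 1 - j)
  simp_rw [map_sum, map_smul, ← Module.End.mul_apply, ← pow_add, hφ, smul_eq_mul] at hc
  rwa [Fintype.sum_eq_single ⟨j, hj⟩ (fun i hi => by
    rw [if_neg (fun h => hi (Fin.ext (by simp; omega))), mul_zero]), if_pos (by simp; omega),
    mul_one] at hc

theorem finrank_span_pow_apply (hf : f ^ k = 0)
    (hφ : ∀ j, φ ((f ^ j) v₀) = if j = k - 1 then 1 else 0) :
    finrank K (Submodule.span K (Set.range fun j : Fin k => (f ^ (j : ℕ)) v₀)) = k := by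
  obtain ⟨m, rfl⟩ := Nat.exists_eq_succ_of_ne_zero (ne_zero_of_pow_apply_eq_ite hf hφ)
  have hm : (f ^ m) v₀ ≠ 0 := fun h => by simpa [h] using hφ m
  rw [finrank_span_eq_card (Module.End.linearIndependent_pow_apply hm (by simp [hf])),
    Fintype.card_fin]

theorem eq_zero_of_hankelForm_add (hf : f ^ k = 0)
    (hφ : ∀ j, φ ((f ^ j) v₀) = if j = k - 1 then 1 else 0) {τ : LinearMap.BilinForm K V}
    (hτ : ∀ x j, τ x ((f ^ j) v₀) = 0)
    (hsep : ∀ v, (∀ m, φ ((f ^ m) v) = 0) → (∀ w, τ v w = 0) → v = 0)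
    {t : K} {v : V} (hv : φ v = 0) (h : ∀ w, t * φ w + (hankelForm f φ k + τ) v w = 0) :
    t = 0 ∧ v = 0 := by
  have hk := ne_zero_of_pow_apply_eq_ite hf hφ
  have hpair : ∀ m < k,
      t * (if m = k - 1 then 1 else 0) + (-1) ^ (m + 1) * φ ((f ^ (m + 1)) v) = 0 := by
    intro m hm
    have := h ((f ^ m) v₀)
    rwa [LinearMap.add_apply, LinearMap.add_apply, hankelForm_apply_pow_apply hφ hm, hτ,
      add_zero, hφ] at this
  have ht : t = 0 := by
    simpa [Nat.sub_add_cancel (Nat.one_le_iff_ne_zero.2 hk), hf] using hpair (k - 1) (by omega)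
  have hall : ∀ m, φ ((f ^ m) v) = 0
    | 0 => hv
    | m + 1 => by
      rcases lt_or_ge m k with hm | hm
      · simpa [ht] using hpair m hm
      · rw [pow_eq_zero_of_le (show k ≤ m + 1 by omega) hf]
        simp
  refine ⟨ht, hsep v hall fun w => ?_⟩
  simpa [ht, hankelForm_apply, hall] using h w

theorem exists_bilinForm_of_finrank_dualAnnihilator_eq_two (hf : IsNilpotent f)
    {W : Submodule K V} (hfW : W ≤ W.comap f) (hW : finrank K W.dualAnnihilator = 2) :
    ∃ τ : LinearMap.BilinForm K V, (∀ x, τ x x = 0) ∧ (∀ x y, τ (f x) y + τ x (f y) = 0) ∧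
      (∀ x, ∀ w ∈ W, τ x w = 0) ∧ ∀ v, (∀ w, τ v w = 0) → v ∈ W := by
  have hinv : Set.MapsTo f.dualMap W.dualAnnihilator W.dualAnnihilator := fun ψ hψ => by
    rw [SetLike.mem_coe, Submodule.mem_dualAnnihilator] at hψ ⊢
    exact fun w hw => hψ _ (hfW hw)
  have hnil : IsNilpotent (f.dualMap.restrict hinv) := by
    obtain ⟨k, hk⟩ := hf
    refine Module.End.isNilpotent.restrict hinv ⟨k, ?_⟩
    rw [Module.End.dualMap_pow, hk]
    ext
    simp
  obtain ⟨b, c, hb0, hb1⟩ :=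
    Module.End.exists_basis_of_isNilpotent_of_finrank_eq_two (V := W.dualAnnihilator) hnil hW
  set ψ₂ : Dual K V := ↑(b 0)
  set ψ₁ : Dual K V := ↑(b 1)
  have hψ₁ : ∀ x, ψ₁ (f x) = 0 := fun x => LinearMap.congr_fun (congrArg Subtype.val hb1) x
  have hψ₂ : ∀ x, ψ₂ (f x) = c * ψ₁ x := fun x =>
    LinearMap.congr_fun (congrArg Subtype.val hb0) x
  refine ⟨ψ₁.smulRight ψ₂ - ψ₂.smulRight ψ₁, fun x => ?_, fun x y => ?_, fun x w hw => ?_,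
    fun v hv => ?_⟩
  · simp only [LinearMap.sub_apply, LinearMap.smulRight_apply, LinearMap.smul_apply, smul_eq_mul]
    ring
  · simp only [LinearMap.sub_apply, LinearMap.smulRight_apply, LinearMap.smul_apply, smul_eq_mul,
      hψ₁, hψ₂]
    ring
  · simp [ψ₁, ψ₂, (Submodule.mem_dualAnnihilator _).1 (b _).2 w hw]
  have hcoeff := Fintype.linearIndependent_iff.1 b.linearIndependent ![ψ₁ v, -ψ₂ v] <|
    Subtype.ext <| LinearMap.ext fun w => by
      simpa [Fin.sum_univ_two, sub_eq_add_neg, mul_comm] using hv w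
  have hev : Module.Dual.eval K V v ∘ₗ W.dualAnnihilator.subtype = 0 := b.ext fun i => by
    fin_cases i
    · simpa using hcoeff 1
    · simpa using hcoeff 0
  rw [← Subspace.forall_mem_dualAnnihilator_apply_eq_zero_iff]
  exact fun ψ hψ => LinearMap.congr_fun hev ⟨ψ, hψ⟩

theorem exists_bilinForm_of_finrank_le [FiniteDimensional K V] (hf : f ^ k = 0)
    (hφ : ∀ j, φ ((f ^ j) v₀) = if j = k - 1 then 1 else 0)
    (hd : finrank K V ≤ k + 2) (hpar : Even (finrank K V + k)) :
    ∃ τ : LinearMap.BilinForm K V, (∀ x, τ x x = 0) ∧ (∀ x y, τ (f x) y + τ x (f y) = 0) ∧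
      (∀ x j, τ x ((f ^ j) v₀) = 0) ∧
      ∀ v, (∀ m, φ ((f ^ m) v) = 0) → (∀ w, τ v w = 0) → v = 0 := by
  set W := Submodule.span K (Set.range fun j : Fin k => (f ^ (j : ℕ)) v₀)
  have hmem : ∀ j, (f ^ j) v₀ ∈ W := fun j => by
    rcases lt_or_ge j k with hj | hj
    · exact Submodule.subset_span ⟨⟨j, hj⟩, rfl⟩
    · rw [pow_eq_zero_of_le hj hf]
      exact W.zero_mem
  have hW : finrank K W = k := finrank_span_pow_apply hf hφ
  have hrank := Subspace.finrank_add_finrank_dualAnnihilator_eq W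
  obtain ⟨r, hr⟩ := hpar
  rcases (by omega : finrank K W.dualAnnihilator = 0 ∨ finrank K W.dualAnnihilator = 2)
    with h0 | h2
  · refine ⟨0, by simp, by simp, by simp, fun v hv _ => eq_zero_of_mem_span_pow_apply hφ ?_ hv⟩
    rw [show Submodule.span K _ = ⊤ from Submodule.eq_top_of_finrank_eq (S := W) (by omega)]
    trivial
  have hfW : W ≤ W.comap f := Submodule.span_le.2 <| by
    rintro _ ⟨j, rfl⟩
    simpa [← Module.End.mul_apply, ← pow_succ'] using hmem (j + 1)
  obtain ⟨τ, hτ, hτf, hτW, hτsep⟩ :=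
    exists_bilinForm_of_finrank_dualAnnihilator_eq_two ⟨k, hf⟩ hfW h2
  exact ⟨τ, hτ, hτf, fun x j => hτW x _ (hmem j),
    fun v hv hτv => eq_zero_of_mem_span_pow_apply hφ (hτsep v hτv) hv⟩

end CyclicComplement

theorem hasSymplecticStructure_of_bilinForm {ι : Type*} [Fintype ι] (A : Matrix ι ι ℝ)
    (φ : Dual ℝ (ι → ℝ)) (B : LinearMap.BilinForm ℝ (ι → ℝ)) (hB : ∀ v, B v v = 0)
    (hBA : ∀ v w, B (A *ᵥ v) w + B v (A *ᵥ w) = 0)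
    (hnd : ∀ (t : ℝ) v, φ v = 0 → (∀ w, t * φ w + B v w = 0) → t = 0 ∧ v = 0) :
    HasSymplecticStructure A := by
  have hsymm : ∀ v w, B (A *ᵥ v) w = B (A *ᵥ w) v := fun v w => by
    linarith [hBA v w, LinearMap.IsAlt.neg hB v (A *ᵥ w)]
  let fst := LinearMap.fst ℝ ℝ (ι → ℝ)
  let snd := LinearMap.snd ℝ ℝ (ι → ℝ)
  set ω := fst.smulRight (φ ∘ₗ snd) - (φ ∘ₗ snd).smulRight fst + B.compl₁₂ snd snd
  have hω : ∀ x y, ω x y = x.1 * φ y.2 - φ x.2 * y.1 + B x.2 y.2 := fun x y => by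
    simp [ω, fst, snd]
  refine ⟨ω, fun x => ?_, fun x hx => ?_, fun x y z => ?_⟩
  · rw [hω, hB]
    ring
  · have h₁ : φ x.2 = 0 := by simpa [hω] using hx (1, 0)
    have h₂ : ∀ w, x.1 * φ w + B x.2 w = 0 := fun w => by simpa [hω] using hx (0, w)
    exact Prod.ext_iff.2 (hnd x.1 x.2 h₁ h₂)
  · simp only [hω, aaBracket, map_sub, map_smul, smul_eq_mul, LinearMap.sub_apply,
      LinearMap.smul_apply]
    linear_combination x.1 * hsymm y.2 z.2 + y.1 * hsymm z.2 x.2 + z.1 * hsymm x.2 y.2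

theorem stmt16_general (n k : ℕ) (hkodd : Odd k)
    (A : Matrix (Fin (2 * n - 1)) (Fin (2 * n - 1)) ℝ)
    (hAk : A ^ k = 0) (hAk' : A ^ (k - 1) ≠ 0)
    (hdim : 2 * n ≤ k + 3) :
    HasSymplecticStructure A := by
  set f := Matrix.toLin' A
  have hf : f ^ k = 0 := by rw [← Matrix.toLin'_pow, hAk, map_zero]
  have hf' : f ^ (k - 1) ≠ 0 := by
    rw [← Matrix.toLin'_pow]
    exact (map_ne_zero_iff _ Matrix.toLin'.injective).2 hAk'
  have hn : n ≠ 0 := by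
    rintro rfl
    exact hAk' (Matrix.ext fun i => Fin.elim0 i)
  obtain ⟨v₀, φ, hφ⟩ := Module.End.exists_dual_pow_apply_eq_ite hf hf'
  obtain ⟨τ, hτ, hτf, hτv₀, hτsep⟩ := exists_bilinForm_of_finrank_le hf hφ
    (by rw [finrank_fin_fun]; omega)
    (by obtain ⟨a, rfl⟩ := hkodd; exact ⟨n + a, by rw [finrank_fin_fun]; omega⟩)
  refine hasSymplecticStructure_of_bilinForm A φ (hankelForm f φ k + τ)
    (fun v => by simp [hankelForm_apply_self hkodd, hτ]) (fun v w => ?_)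
    (fun t v hv h => eq_zero_of_hankelForm_add hf hφ hτv₀ hτsep hv h)
  have hσ := hankelForm_map_add_map (φ := φ) (pow_eq_zero_of_le k.le_succ hf) v w
  simp only [f, Matrix.toLin'_apply] at hσ hτf
  simp only [LinearMap.add_apply]
  linear_combination hσ + hτf v w

/-- Let `k ≥ 5` be odd and `A ∈ M(2n-1,ℝ)` with
`A^k = 0 ≠ A^{k-1}` (so `𝔤_A` is `k`-step nilpotent). If `dim 𝔤_A = 2n ≤ k + 3`,
then `𝔤_A` admits a symplectic structure. -/
theorem stmt16 (n k : ℕ) (hk5 : 5 ≤ k) (hkodd : Odd k)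
    (A : Matrix (Fin (2 * n - 1)) (Fin (2 * n - 1)) ℝ)
    (hAk : A ^ k = 0) (hAk' : A ^ (k - 1) ≠ 0)
    (hdim : 2 * n ≤ k + 3) :
    HasSymplecticStructure A :=
  stmt16_general n k hkodd A hAk hAk' hdim
end
end

section
/- Let M ∈ M(2n−1,ℝ) and suppose the almost abelian Lie algebra 𝔤_M = ℝe₀ ⋉_M ℝ^{2n−1} admits a complex structure. Then there exists exactly one real eigenvalue a of M whose algebraic multiplicity m_a = dim ker((M − aI_{2n−1})^{2n−1}) is odd; in particular, M has at least one real eigenvalue. -/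
/-!
Write `j(0, x) = (φ x, ψ x)` for `x ∈ ℝ^d`. Since `j² = -1`, the dimension `d + 1` is even, so
`d` is odd, and on `ker φ` the map `ψ` is again a complex structure; in particular `φ ≠ 0`. The
Nijenhuis condition for `(0, x)` and `(0, y)` with `φ x = 0`, `φ y = 1` says that `ker φ` is
`M`-invariant and that `ψ` commutes with `M` there, so `φ ∘ M = a φ` for some `a ∈ ℝ`, and
every generalized eigenspace of `M|ker φ` carries a complex structure and has even dimension.
A generalized eigenspace of `M` for `μ ≠ a` lies in `ker φ`, while the one for `a` meets
`ker φ` in a hyperplane (Fitting decomposition). Hence exactly the multiplicity of `a` is odd.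
-/

open Matrix Module

noncomputable section

theorem Submodule.finrank_inf_ker_add_one {K V : Type*} [Field K] [AddCommGroup V] [Module K V]
    {U : Submodule K V} [FiniteDimensional K U] {φ : V →ₗ[K] K} (h : ¬ U ≤ LinearMap.ker φ) :
    finrank K ↥(U ⊓ LinearMap.ker φ) + 1 = finrank K U := by
  have hne : φ.domRestrict U ≠ 0 := by
    contrapose! h
    intro x hx
    exact congr($h ⟨x, hx⟩)
  rw [← Module.Dual.finrank_ker_add_one_of_ne_zero hne, LinearMap.ker_domRestrict,
    ← Submodule.finrank_map_subtype_eq, Submodule.map_comap_subtype]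

namespace Module.End

variable {K V : Type*} [Field K] [AddCommGroup V] [Module K V]

theorem even_finrank_of_apply_apply_eq_neg [LinearOrder K] [IsStrictOrderedRing K]
    (J : End K V) (hJ : ∀ x, J (J x) = -x) : Even (finrank K V) := by
  have hJJ : J * J = (-1 : K) • 1 := by ext x; simp [hJ]
  have hdet : J.det * J.det = (-1) ^ finrank K V := by
    rw [← map_mul, hJJ, LinearMap.det_smul, map_one, mul_one]
  by_contra hodd
  rw [Nat.not_even_iff_odd.mp hodd |>.neg_one_pow] at hdet
  nlinarith [mul_self_nonneg J.det]

theorem even_finrank_maxGenEigenspace_of_commute [LinearOrder K] [IsStrictOrderedRing K]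
    {f J : End K V} (hJ : ∀ x, J (J x) = -x) (hJf : Commute f J) (μ : K) :
    Even (finrank K (f.maxGenEigenspace μ)) :=
  even_finrank_of_apply_apply_eq_neg (J.restrict (mapsTo_maxGenEigenspace_of_comm hJf μ))
    fun x => Subtype.ext (hJ x)

variable {f J : End K V} {φ : V →ₗ[K] K} {a : K}

theorem exists_comp_eq_smul_of_mapsTo_ker (hφ : φ ≠ 0)
    (hf : ∀ x ∈ LinearMap.ker φ, f x ∈ LinearMap.ker φ) : ∃ a : K, φ ∘ₗ f = a • φ := by
  obtain ⟨y, hy⟩ := LinearMap.range_eq_top.mp (Module.Dual.range_eq_top_of_ne_zero hφ) 1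
  refine ⟨φ (f y), LinearMap.ext fun x => ?_⟩
  have hx : x - φ x • y ∈ LinearMap.ker φ := by simp [hy]
  have := hf _ hx
  simp only [LinearMap.mem_ker, map_sub, map_smul, smul_eq_mul, sub_eq_zero] at this
  simp [this, mul_comm]

theorem comp_pow_sub_smul_eq (hφf : φ ∘ₗ f = a • φ) (μ : K) (k : ℕ) :
    φ ∘ₗ (f - μ • 1) ^ k = (a - μ) ^ k • φ := by
  induction k with
  | zero => rw [pow_zero, pow_zero, one_smul]; rfl
  | succ k ih =>
    rw [pow_succ, Module.End.mul_eq_comp, ← LinearMap.comp_assoc, ih, LinearMap.smul_comp,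
      LinearMap.comp_sub, hφf, LinearMap.comp_smul, Module.End.one_eq_id, LinearMap.comp_id,
      pow_succ, mul_smul, sub_smul]

theorem maxGenEigenspace_le_ker_of_comp_eq_smul (hφf : φ ∘ₗ f = a • φ) {μ : K} (hμ : μ ≠ a) :
    f.maxGenEigenspace μ ≤ LinearMap.ker φ := by
  intro x hx
  obtain ⟨k, hk⟩ := (mem_maxGenEigenspace f μ x).mp hx
  have := congr($(comp_pow_sub_smul_eq hφf μ k) x)
  simp only [LinearMap.comp_apply, hk, map_zero, LinearMap.smul_apply, smul_eq_mul] at this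
  exact (mul_eq_zero.mp this.symm).resolve_left (pow_ne_zero _ (sub_ne_zero.mpr hμ.symm))

theorem not_maxGenEigenspace_le_ker_of_comp_eq_smul [FiniteDimensional K V] (hφ : φ ≠ 0)
    (hφf : φ ∘ₗ f = a • φ) : ¬ f.maxGenEigenspace a ≤ LinearMap.ker φ := by
  intro hle
  obtain ⟨k, hk⟩ := (((f - a • 1).eventually_isCompl_ker_pow_range_pow).and
    (Filter.eventually_ge_atTop 1)).exists
  have hker : LinearMap.ker ((f - a • 1) ^ k) ≤ LinearMap.ker φ :=
    le_trans (fun x hx => (mem_maxGenEigenspace f a x).mpr ⟨k, hx⟩) hle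
  have hrange : LinearMap.range ((f - a • 1) ^ k) ≤ LinearMap.ker φ := by
    rintro _ ⟨x, rfl⟩
    have := congr($(comp_pow_sub_smul_eq hφf a k) x)
    simpa [zero_pow (by omega : k ≠ 0)] using this
  apply hφ
  rw [← LinearMap.ker_eq_top, eq_top_iff, ← hk.1.sup_eq_top]
  exact sup_le hker hrange

variable [LinearOrder K] [IsStrictOrderedRing K]

theorem even_finrank_maxGenEigenspace_inf_ker (hφf : φ ∘ₗ f = a • φ)
    (hJφ : ∀ x ∈ LinearMap.ker φ, J x ∈ LinearMap.ker φ)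
    (hJ : ∀ x ∈ LinearMap.ker φ, J (J x) = -x)
    (hJf : ∀ x ∈ LinearMap.ker φ, J (f x) = f (J x)) (μ : K) :
    Even (finrank K ↥(f.maxGenEigenspace μ ⊓ LinearMap.ker φ)) := by
  have hfφ : ∀ x ∈ LinearMap.ker φ, f x ∈ LinearMap.ker φ := fun x hx => by
    rw [LinearMap.mem_ker] at hx ⊢
    simpa [hx] using congr($hφf x)
  have hcomm : Commute (f.restrict hfφ) (J.restrict hJφ) :=
    LinearMap.ext fun x => Subtype.ext (hJf x x.2).symm
  have := even_finrank_maxGenEigenspace_of_commute (fun x => Subtype.ext (hJ x x.2)) hcomm μ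
  rwa [← Submodule.finrank_map_subtype_eq, ← Submodule.inf_genEigenspace _ _ hfφ, inf_comm] at this

theorem odd_finrank_maxGenEigenspace_iff [FiniteDimensional K V] (hφ : φ ≠ 0)
    (hφf : φ ∘ₗ f = a • φ) (hJφ : ∀ x ∈ LinearMap.ker φ, J x ∈ LinearMap.ker φ)
    (hJ : ∀ x ∈ LinearMap.ker φ, J (J x) = -x)
    (hJf : ∀ x ∈ LinearMap.ker φ, J (f x) = f (J x)) (μ : K) :
    Odd (finrank K (f.maxGenEigenspace μ)) ↔ μ = a := by
  have heven := even_finrank_maxGenEigenspace_inf_ker hφf hJφ hJ hJf μ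
  constructor
  · intro hodd
    by_contra hμ
    rw [inf_eq_left.mpr (maxGenEigenspace_le_ker_of_comp_eq_smul hφf hμ)] at heven
    exact Nat.not_even_iff_odd.mpr hodd heven
  · rintro rfl
    rw [← Submodule.finrank_inf_ker_add_one (not_maxGenEigenspace_le_ker_of_comp_eq_smul hφ hφf)]
    exact heven.add_one

end Module.End

namespace Matrix

variable {ι : Type*} [Fintype ι] [DecidableEq ι]

theorem ker_mulVecLin_sub_smul_one_pow (M : Matrix ι ι ℝ) (a : ℝ) {k : ℕ}
    (hk : Fintype.card ι ≤ k) :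
    LinearMap.ker (mulVecLin ((M - a • 1) ^ k)) = Module.End.maxGenEigenspace M.mulVecLin a := by
  have hlin : mulVecLin ((M - a • 1) ^ k) = (M.mulVecLin - a • 1) ^ k := by
    change toLinAlgEquiv' _ = (toLinAlgEquiv' M - a • 1) ^ k
    simp
  rw [hlin, ← Module.End.genEigenspace_nat, Module.End.maxGenEigenspace_eq_genEigenspace_finrank,
    Module.End.genEigenspace_eq_genEigenspace_finrank_of_le]
  simpa using hk

theorem det_sub_smul_one_eq_zero_of_finrank_maxGenEigenspace_pos (M : Matrix ι ι ℝ) (a : ℝ)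
    (h : 0 < finrank ℝ (Module.End.maxGenEigenspace M.mulVecLin a)) : (M - a • 1).det = 0 := by
  rw [LinearMap.finrank_maxGenEigenspace_eq, Polynomial.rootMultiplicity_pos',
    charpoly_mulVecLin, Polynomial.IsRoot.def, eval_charpoly] at h
  rw [← neg_sub, det_neg, smul_one_eq_diagonal, ← scalar_apply, h.2, mul_zero]

end Matrix

theorem apply_apply_inr_of_fst_eq_zero {ι : Type*} {j : (ℝ × (ι → ℝ)) →ₗ[ℝ] ℝ × (ι → ℝ)}
    (hj : ∀ x, j (j x) = -x) {x : ι → ℝ} (hx : (j (0, x)).1 = 0) :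
    (j (0, (j (0, x)).2)).1 = 0 ∧ (j (0, (j (0, x)).2)).2 = -x := by
  have hjx : j (0, x) = (0, (j (0, x)).2) := Prod.ext hx rfl
  have := hj (0, x)
  rw [hjx] at this
  simp [this]

section ComplexStructure

variable {ι : Type*} [Fintype ι] {A : Matrix ι ι ℝ}

theorem apply_inr_mulVec_of_nijenhuis {j : (ℝ × (ι → ℝ)) →ₗ[ℝ] ℝ × (ι → ℝ)}
    (hN : ∀ x y, aaBracket A x y + j (aaBracket A (j x) y + aaBracket A x (j y))
        - aaBracket A (j x) (j y) = 0)
    {x y : ι → ℝ} (hx : (j (0, x)).1 = 0) (hy : (j (0, y)).1 = 1) :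
    j (0, A *ᵥ x) = (0, A *ᵥ (j (0, x)).2) := by
  have hjx : j (0, x) = (0, (j (0, x)).2) := Prod.ext hx rfl
  have hjy : j (0, y) = (1, (j (0, y)).2) := Prod.ext hy rfl
  have hNxy := hN (0, x) (0, y)
  rw [hjx, hjy] at hNxy
  simp only [aaBracket, zero_smul, one_smul, sub_self, zero_sub] at hNxy
  rw [Prod.mk_zero_zero, zero_add, zero_add, sub_eq_zero] at hNxy
  calc j (0, A *ᵥ x) = -j (0, -(A *ᵥ x)) := by rw [← map_neg, Prod.neg_mk, neg_zero, neg_neg]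
    _ = (0, A *ᵥ (j (0, x)).2) := by rw [hNxy, Prod.neg_mk, neg_zero, neg_neg]

theorem HasComplexStructure.odd_card (hc : HasComplexStructure A) : Odd (Fintype.card ι) := by
  obtain ⟨j, hj, -⟩ := hc
  have := Module.End.even_finrank_of_apply_apply_eq_neg j hj
  rw [finrank_prod, finrank_self, finrank_fintype_fun_eq_card, add_comm, Nat.even_add_one] at this
  exact Nat.not_even_iff_odd.mp this

theorem HasComplexStructure.exists_odd_finrank_maxGenEigenspace_iff
    (hc : HasComplexStructure A) :
    ∃ a : ℝ, ∀ μ, Odd (finrank ℝ (Module.End.maxGenEigenspace A.mulVecLin μ)) ↔ μ = a := by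
  have hodd := hc.odd_card
  obtain ⟨j, hj, hN⟩ := hc
  set φ := LinearMap.fst ℝ ℝ (ι → ℝ) ∘ₗ j ∘ₗ LinearMap.inr ℝ ℝ (ι → ℝ)
  set ψ := LinearMap.snd ℝ ℝ (ι → ℝ) ∘ₗ j ∘ₗ LinearMap.inr ℝ ℝ (ι → ℝ)
  have hψ : ∀ x ∈ LinearMap.ker φ, ψ x ∈ LinearMap.ker φ ∧ ψ (ψ x) = -x := fun x hx =>
    apply_apply_inr_of_fst_eq_zero hj (LinearMap.mem_ker.mp hx)
  have hφ : φ ≠ 0 := by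
    intro h0
    have := Module.End.even_finrank_of_apply_apply_eq_neg ψ fun x =>
      (hψ x (by simp [h0])).2
    rw [finrank_fintype_fun_eq_card] at this
    exact Nat.not_even_iff_odd.mpr hodd this
  obtain ⟨y, hy⟩ := LinearMap.range_eq_top.mp (Module.Dual.range_eq_top_of_ne_zero hφ) 1
  have hA : ∀ x ∈ LinearMap.ker φ, j (0, A *ᵥ x) = (0, A *ᵥ ψ x) := fun x hx =>
    apply_inr_mulVec_of_nijenhuis hN (LinearMap.mem_ker.mp hx) hy
  obtain ⟨a, ha⟩ := Module.End.exists_comp_eq_smul_of_mapsTo_ker (f := A.mulVecLin) hφ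
    fun x hx => congr(Prod.fst $(hA x hx))
  exact ⟨a, Module.End.odd_finrank_maxGenEigenspace_iff hφ ha (fun x hx => (hψ x hx).1)
    (fun x hx => (hψ x hx).2) (fun x hx => congr(Prod.snd $(hA x hx)))⟩

end ComplexStructure

/-- If `𝔤_M` admits a complex structure (`M ∈ M(2n-1,ℝ)`), then
there is exactly one real eigenvalue `a` of `M` whose algebraic multiplicity
`m_a = dim ker((M - aI)^{2n-1})` is odd; in particular `M` has a real
eigenvalue. -/
theorem stmt17 (n : ℕ)
    (M : Matrix (Fin (2 * n - 1)) (Fin (2 * n - 1)) ℝ)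
    (hc : HasComplexStructure M) :
    ∃! a : ℝ,
      (M - a • (1 : Matrix (Fin (2 * n - 1)) (Fin (2 * n - 1)) ℝ)).det = 0 ∧
      Odd (Module.finrank ℝ
        (LinearMap.ker (Matrix.mulVecLin
          ((M - a • (1 : Matrix (Fin (2 * n - 1)) (Fin (2 * n - 1)) ℝ)) ^ (2 * n - 1))))) := by
  obtain ⟨a, ha⟩ := hc.exists_odd_finrank_maxGenEigenspace_iff
  have hker (μ : ℝ) := Matrix.ker_mulVecLin_sub_smul_one_pow M μ (Fintype.card_fin (2 * n - 1)).le
  have hodd : Odd (finrank ℝ (Module.End.maxGenEigenspace M.mulVecLin a)) := (ha a).mpr rfl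
  refine ⟨a, ⟨?_, hker a ▸ hodd⟩, fun μ hμ => (ha μ).mp (hker μ ▸ hμ.2)⟩
  exact Matrix.det_sub_smul_one_eq_zero_of_finrank_maxGenEigenspace_pos M a hodd.pos
end
end

section
/- Let n ≥ 2, a ∈ ℝ, and let M = M(a) ⊕ Q ∈ M(2n−1,ℝ), where M(a) ∈ M(m_a,ℝ) is such that M(a) − aI_{m_a} is nilpotent (so a is the only complex eigenvalue of M(a)), m_a is odd, and Q ∈ M(m,ℝ) with m = 2n−1−m_a ≥ 1 and Q − aI_m invertible (a is not an eigenvalue of Q). Then the almost abelian Lie algebra 𝔤_M = ℝe₀ ⋉_M ℝ^{2n−1} admits a complex structure if and only if the (m_a+1)-dimensional almost abelian Lie algebra 𝔤_{M(a)} = ℝe₀ ⋉_{M(a)} ℝ^{m_a} admits a complex structure and there exists J' ∈ M(m,ℝ) with (J')² = −I_m and QJ' = J'Q. -/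
open Matrix Module

noncomputable section

namespace Stmt18Aux

open Polynomial

/-- No linear `f` with `f² = -1` on an odd-dimensional real vector space. -/
lemma no_cs_odd {V : Type*} [AddCommGroup V] [Module ℝ V] [FiniteDimensional ℝ V]
    (hodd : Odd (finrank ℝ V)) (f : V →ₗ[ℝ] V) (hf : ∀ v, f (f v) = -v) : False := by
  have hcomp : f ∘ₗ f = (-1 : ℝ) • LinearMap.id := by
    ext v; simp [hf v]
  have h1 : LinearMap.det (f ∘ₗ f) = LinearMap.det f * LinearMap.det f := by
    rw [LinearMap.det_comp]
  have h2 : LinearMap.det ((-1 : ℝ) • (LinearMap.id : V →ₗ[ℝ] V)) = (-1 : ℝ) ^ finrank ℝ V := by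
    rw [LinearMap.det_smul, LinearMap.det_id, mul_one]
  rw [hcomp, h2, hodd.neg_one_pow] at h1
  nlinarith [sq_nonneg (LinearMap.det f)]

/-- Sufficiency: data `(φ, ψ, b)` gives a complex structure on `𝔤_A`. -/
lemma CS_of_data {ι : Type*} [Fintype ι] (A : Matrix ι ι ℝ)
    (φ : (ι → ℝ) →ₗ[ℝ] ℝ) (ψ : (ι → ℝ) →ₗ[ℝ] (ι → ℝ)) (b : ι → ℝ)
    (hb : φ b = 1) (hψb : ψ b = 0)
    (hA : ∀ v, φ v = 0 → φ (A.mulVec v) = 0)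
    (hcomm : ∀ v, φ v = 0 → ψ (A.mulVec v) = A.mulVec (ψ v))
    (hφψ : ∀ v, φ v = 0 → φ (ψ v) = 0)
    (hψψ : ∀ v, φ v = 0 → ψ (ψ v) = -v) :
    HasComplexStructure A := by
  have hker : ∀ v : ι → ℝ, φ (v - φ v • b) = 0 := by
    intro v; simp [hb]
  have hψbar : ∀ v : ι → ℝ, ψ (v - φ v • b) = ψ v := by
    intro v; simp [hψb]
  have f1 : ∀ v, φ (ψ v) = 0 := by
    intro v; rw [← hψbar v]; exact hφψ _ (hker v)
  have f2 : ∀ v, ψ (ψ v) = -v + φ v • b := by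
    intro v; rw [← hψbar v, hψψ _ (hker v)]; simp; abel
  have f3 : ∀ v, φ (A.mulVec (ψ v)) = 0 := fun v => hA _ (f1 v)
  have f4 : ∀ v, ψ (A.mulVec (ψ v)) = -(A.mulVec v) + φ v • A.mulVec b := by
    intro v
    rw [hcomm _ (f1 v), f2 v]
    rw [Matrix.mulVec_add, Matrix.mulVec_neg, Matrix.mulVec_smul]
  have f5 : ∀ v, φ (A.mulVec v) = φ v * φ (A.mulVec b) := by
    intro v
    have := hA _ (hker v)
    rw [Matrix.mulVec_sub, Matrix.mulVec_smul, map_sub, _root_.map_smul] at this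
    simp at this; linarith
  have f6 : ∀ v, ψ (A.mulVec v) = A.mulVec (ψ v) + φ v • ψ (A.mulVec b) := by
    intro v
    have := hcomm _ (hker v)
    rw [Matrix.mulVec_sub, Matrix.mulVec_smul, map_sub, _root_.map_smul, hψbar] at this
    rw [sub_eq_iff_eq_add] at this
    rw [this]
  refine ⟨{ toFun := fun x => (φ x.2, ψ x.2 - x.1 • b),
            map_add' := by intro x y; simp [add_smul]; abel
            map_smul' := by intro c x; simp [smul_smul, smul_sub]}, ?_, ?_⟩
  · rintro ⟨t, v⟩
    simp only [LinearMap.coe_mk, AddHom.coe_mk]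
    rw [map_sub, map_sub, _root_.map_smul, _root_.map_smul, hψb, f1, f2]
    simp only [Prod.neg_mk, Prod.mk.injEq, hb]
    constructor
    · simp [hb]
    · simp only [smul_zero]; abel
  · rintro ⟨t, v⟩ ⟨s, w⟩
    simp only [LinearMap.coe_mk, AddHom.coe_mk, aaBracket]
    rw [Matrix.mulVec_sub, Matrix.mulVec_smul, Matrix.mulVec_sub, Matrix.mulVec_smul]
    simp only [Prod.mk_add_mk, Prod.mk_sub_mk, Prod.mk_eq_zero]
    constructor
    · simp only [map_add, map_sub, _root_.map_smul, smul_eq_mul, f3, f5 v, f5 w]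
      ring
    · simp only [map_add, map_sub, _root_.map_smul, f4 v, f4 w, f6 v, f6 w, hψb,
        Matrix.mulVec_sub, Matrix.mulVec_smul]
      module

/-- Necessity: a complex structure on `𝔤_A`, `dim` odd, yields data `(φ, ψ, b)`. -/
lemma data_of_CS {ι : Type*} [Fintype ι] (hodd : Odd (Fintype.card ι))
    (A : Matrix ι ι ℝ) (h : HasComplexStructure A) :
    ∃ (φ : (ι → ℝ) →ₗ[ℝ] ℝ) (ψ : (ι → ℝ) →ₗ[ℝ] (ι → ℝ)) (b : ι → ℝ),
      φ b = 1 ∧ ψ b = 0 ∧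
      (∀ v, φ v = 0 → φ (A.mulVec v) = 0) ∧
      (∀ v, φ v = 0 → ψ (A.mulVec v) = A.mulVec (ψ v)) ∧
      (∀ v, φ v = 0 → φ (ψ v) = 0) ∧
      (∀ v, φ v = 0 → ψ (ψ v) = -v) := by
  obtain ⟨j, hj2, hjN⟩ := h
  set ι0 : (ι → ℝ) →ₗ[ℝ] ℝ × (ι → ℝ) := LinearMap.inr ℝ ℝ (ι → ℝ) with hι0
  set φ0 : (ι → ℝ) →ₗ[ℝ] ℝ := (LinearMap.fst ℝ ℝ (ι → ℝ)) ∘ₗ (j ∘ₗ ι0) with hφ0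
  set ψ0 : (ι → ℝ) →ₗ[ℝ] (ι → ℝ) := (LinearMap.snd ℝ ℝ (ι → ℝ)) ∘ₗ (j ∘ₗ ι0) with hψ0
  have hj0 : ∀ v : ι → ℝ, j (0, v) = (φ0 v, ψ0 v) := fun v => rfl
  have hsq : ∀ v : ι → ℝ, j (φ0 v, ψ0 v) = (-0, -v) := by
    intro v; rw [← hj0 v, hj2 (0, v)]; rfl
  have hsq0 : ∀ v : ι → ℝ, φ0 v = 0 → φ0 (ψ0 v) = 0 ∧ ψ0 (ψ0 v) = -v := by
    intro v hv
    have := hsq v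
    rw [hv, hj0 (ψ0 v)] at this
    exact ⟨by simpa using congrArg Prod.fst this, by simpa using congrArg Prod.snd this⟩
  have hφ0ne : ∃ v, φ0 v ≠ 0 := by
    by_contra hc
    push_neg at hc
    refine no_cs_odd (V := ι → ℝ) (by simpa using hodd) ψ0 ?_
    intro v
    exact (hsq0 v (hc v)).2
  obtain ⟨b0, hb0⟩ := hφ0ne
  set b : ι → ℝ := (φ0 b0)⁻¹ • b0 with hbdef
  have hb : φ0 b = 1 := by
    rw [hbdef, _root_.map_smul, smul_eq_mul, inv_mul_cancel₀ hb0]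
  have hN : ∀ u : ι → ℝ, φ0 u = 0 → φ0 (A.mulVec u) = 0 ∧ ψ0 (A.mulVec u) = A.mulVec (ψ0 u) := by
    intro u hu
    have := hjN (0, u) (0, b)
    simp only [aaBracket, hj0 u, hj0 b] at this
    rw [hu, hb] at this
    simp only [zero_smul, one_smul, smul_zero, sub_zero, zero_sub, zero_smul] at this
    simp only [Prod.mk_add_mk, zero_add, add_zero, hj0, map_neg, Prod.mk_sub_mk,
      Prod.mk_eq_zero, sub_zero, neg_eq_zero, neg_sub_neg, sub_eq_zero] at this
    exact ⟨this.1, this.2.symm⟩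
  refine ⟨φ0, ψ0 ∘ₗ (LinearMap.id - (LinearMap.toSpanSingleton ℝ (ι → ℝ) b) ∘ₗ φ0), b,
    hb, ?_, ?_, ?_, ?_, ?_⟩
  · simp [LinearMap.toSpanSingleton_apply, hb]
  · intro v hv; exact (hN v hv).1
  · intro v hv
    have hAv := (hN v hv).1
    simp only [LinearMap.comp_apply, LinearMap.sub_apply, LinearMap.id_apply,
      LinearMap.toSpanSingleton_apply, hv, hAv, zero_smul, sub_zero]
    exact (hN v hv).2
  · intro v hv
    simp only [LinearMap.comp_apply, LinearMap.sub_apply, LinearMap.id_apply,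
      LinearMap.toSpanSingleton_apply, hv, zero_smul, sub_zero]
    exact (hsq0 v hv).1
  · intro v hv
    simp only [LinearMap.comp_apply, LinearMap.sub_apply, LinearMap.id_apply,
      LinearMap.toSpanSingleton_apply, hv, zero_smul, sub_zero, (hsq0 v hv).1]
    exact (hsq0 v hv).2

lemma aeval_fromBlocks {ι₁ ι₂ : Type*} [Fintype ι₁] [Fintype ι₂] [DecidableEq ι₁] [DecidableEq ι₂]
    (A : Matrix ι₁ ι₁ ℝ) (D : Matrix ι₂ ι₂ ℝ) (p : ℝ[X]) :
    aeval (fromBlocks A 0 0 D) p = fromBlocks (aeval A p) 0 0 (aeval D p) := by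
  induction p using Polynomial.induction_on with
  | C r =>
    simp only [aeval_C]
    ext (i|i) (j|j) <;>
      simp [Matrix.algebraMap_matrix_apply, Matrix.fromBlocks, Sum.inl.injEq, Sum.inr.injEq]
  | add p q hp hq => simp [hp, hq, Matrix.fromBlocks_add]
  | monomial n r hp =>
    have e : C r * X ^ (n + 1) = C r * X ^ n * X := by ring
    rw [e, _root_.map_mul (aeval (fromBlocks A 0 0 D)) (C r * X ^ n) X, hp, aeval_X,
      _root_.map_mul (aeval A) (C r * X ^ n) X, aeval_X,
      _root_.map_mul (aeval D) (C r * X ^ n) X, aeval_X, Matrix.fromBlocks_multiply]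
    simp

lemma exists_proj_poly {ι₁ ι₂ : Type*} [Fintype ι₁] [Fintype ι₂] [DecidableEq ι₁] [DecidableEq ι₂]
    (a : ℝ) (Ma : Matrix ι₁ ι₁ ℝ) (Q : Matrix ι₂ ι₂ ℝ)
    (hMa : IsNilpotent (Ma - a • (1 : Matrix ι₁ ι₁ ℝ)))
    (hQ : IsUnit (Q - a • (1 : Matrix ι₂ ι₂ ℝ))) :
    ∃ f : ℝ[X], aeval Ma f = 0 ∧ aeval Q f = 1 := by
  obtain ⟨k, hk⟩ := hMa
  set q : ℝ[X] := Q.charpoly with hq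
  have heval : q.eval a ≠ 0 := by
    have h1 : q.eval a = ((charmatrix Q).map (evalRingHom a)).det := by
      rw [hq, Matrix.charpoly,
        show ((charmatrix Q).map (evalRingHom a)) = (evalRingHom a).mapMatrix (charmatrix Q) from
          (RingHom.mapMatrix_apply _ _).symm, ← RingHom.map_det]
      rfl
    have h2 : (charmatrix Q).map (evalRingHom a) = a • (1 : Matrix ι₂ ι₂ ℝ) - Q := by
      ext i j
      by_cases hij : i = j
      · subst hij; simp [charmatrix_apply, Matrix.smul_apply, Matrix.one_apply]
      · simp [charmatrix_apply, Matrix.smul_apply, Matrix.one_apply, hij,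
          Matrix.diagonal_apply_ne _ hij]
    have h3 : IsUnit (a • (1 : Matrix ι₂ ι₂ ℝ) - Q) := by
      rw [show a • (1 : Matrix ι₂ ι₂ ℝ) - Q = -(Q - a • 1) from by rw [neg_sub]]
      exact hQ.neg
    rw [h1, h2]
    exact ((Matrix.isUnit_iff_isUnit_det _).mp h3).ne_zero
  have hndvd : ¬ (X - C a) ∣ q := by
    rw [Polynomial.dvd_iff_isRoot]
    exact fun hroot => heval hroot
  have hcop : IsCoprime ((X - C a) ^ k) q :=
    ((Polynomial.irreducible_X_sub_C a).coprime_iff_not_dvd.mpr hndvd).pow_left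
  obtain ⟨u, v, huv⟩ := hcop
  refine ⟨u * (X - C a) ^ k, ?_, ?_⟩
  · rw [_root_.map_mul, map_pow, map_sub, aeval_X, aeval_C]
    rw [show (algebraMap ℝ (Matrix ι₁ ι₁ ℝ)) a = a • 1 by
      simp [Matrix.algebraMap_eq_diagonal, Matrix.smul_one_eq_diagonal], hk]
    simp
  · have : aeval Q (u * (X - C a) ^ k) + aeval Q (v * q) = 1 := by
      rw [← map_add, huv, _root_.map_one]
    rwa [_root_.map_mul (aeval Q) v q, hq, Matrix.aeval_self_charpoly, mul_zero, add_zero] at this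

variable {ι₁ ι₂ : Type*} [Fintype ι₁] [Fintype ι₂] [DecidableEq ι₁] [DecidableEq ι₂]

/-- Extension by zero on the left summand. -/
def exl : (ι₁ → ℝ) →ₗ[ℝ] (ι₁ ⊕ ι₂ → ℝ) where
  toFun v := Sum.elim v 0
  map_add' v w := by funext x; cases x <;> simp
  map_smul' c v := by funext x; cases x <;> simp

/-- Extension by zero on the right summand. -/
def exr : (ι₂ → ℝ) →ₗ[ℝ] (ι₁ ⊕ ι₂ → ℝ) where
  toFun v := Sum.elim 0 v
  map_add' v w := by funext x; cases x <;> simp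
  map_smul' c v := by funext x; cases x <;> simp

set_option linter.unusedSectionVars false in
@[simp] lemma exl_apply (v : ι₁ → ℝ) : exl (ι₂ := ι₂) v = Sum.elim v (0 : ι₂ → ℝ) := rfl
set_option linter.unusedSectionVars false in
@[simp] lemma exr_apply (v : ι₂ → ℝ) : exr (ι₁ := ι₁) v = Sum.elim (0 : ι₁ → ℝ) v := rfl

lemma blocks_mulVec (Ma : Matrix ι₁ ι₁ ℝ) (Q : Matrix ι₂ ι₂ ℝ) (v : ι₁ ⊕ ι₂ → ℝ) :
    (fromBlocks Ma 0 0 Q).mulVec v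
      = Sum.elim (Ma.mulVec (v ∘ Sum.inl)) (Q.mulVec (v ∘ Sum.inr)) := by
  conv_lhs => rw [← Sum.elim_comp_inl_inr v]
  rw [Matrix.fromBlocks_mulVec]
  simp

end Stmt18Aux

/-- Let `n ≥ 2`, `a ∈ ℝ`, and `M = M(a) ⊕ Q ∈ M(2n-1,ℝ)`, where
`M(a) - aI` is nilpotent, `m_a` is odd, and `a` is not an eigenvalue of
`Q ∈ M(m,ℝ)`, `m = 2n-1-m_a ≥ 1`. Then `𝔤_M` admits a complex structure iff
`𝔤_{M(a)}` admits a complex structure and `Q` commutes with some `J'` with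
`J'² = -I`. -/
theorem stmt18 (nn ma m : ℕ) (hn : 2 ≤ nn) (a : ℝ)
    (hma : Odd ma) (hm : 1 ≤ m) (hsum : ma + m = 2 * nn - 1)
    (Ma : Matrix (Fin ma) (Fin ma) ℝ)
    (hMa : IsNilpotent (Ma - a • (1 : Matrix (Fin ma) (Fin ma) ℝ)))
    (Q : Matrix (Fin m) (Fin m) ℝ)
    (hQ : IsUnit (Q - a • (1 : Matrix (Fin m) (Fin m) ℝ))) :
    HasComplexStructure (Matrix.fromBlocks Ma 0 0 Q) ↔
      HasComplexStructure Ma ∧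
        ∃ J' : Matrix (Fin m) (Fin m) ℝ, J' * J' = -1 ∧ Q * J' = J' * Q := by
  classical
  open Stmt18Aux Polynomial in
  -- common setup
  have hoddκ : Odd (Fintype.card (Fin ma ⊕ Fin m)) := by
    simp only [Fintype.card_sum, Fintype.card_fin, hsum]
    exact ⟨nn - 1, by omega⟩
  obtain ⟨f, hfMa, hfQ⟩ := exists_proj_poly a Ma Q hMa hQ
  have hP : aeval (Matrix.fromBlocks Ma 0 0 Q) f
      = Matrix.fromBlocks 0 0 0 (1 : Matrix (Fin m) (Fin m) ℝ) := by
    rw [aeval_fromBlocks, hfMa, hfQ]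
  have hmulV : ∀ v : (Fin ma ⊕ Fin m) → ℝ, (Matrix.fromBlocks Ma 0 0 Q).mulVec v
      = Sum.elim (Ma.mulVec (v ∘ Sum.inl)) (Q.mulVec (v ∘ Sum.inr)) :=
    fun v => blocks_mulVec Ma Q v
  have hPv : ∀ v : (Fin ma ⊕ Fin m) → ℝ,
      (Matrix.fromBlocks 0 0 0 (1 : Matrix (Fin m) (Fin m) ℝ)).mulVec v
        = Sum.elim (0 : Fin ma → ℝ) (v ∘ Sum.inr) := by
    intro v
    rw [blocks_mulVec]
    simp
  constructor
  · -- forward direction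
    intro h
    obtain ⟨φ, ψ, b, hb, hψb, hA, hcomm, hφψ, hψψ⟩ := data_of_CS hoddκ _ h
    -- commutation with polynomials in the matrix
    have hpoly : ∀ p : ℝ[X], ∀ v, φ v = 0 →
        φ ((aeval (Matrix.fromBlocks Ma 0 0 Q) p).mulVec v) = 0 ∧
        ψ ((aeval (Matrix.fromBlocks Ma 0 0 Q) p).mulVec v)
          = (aeval (Matrix.fromBlocks Ma 0 0 Q) p).mulVec (ψ v) := by
      intro p
      induction p using Polynomial.induction_on with
      | C r =>
        intro v hv
        have hsm : (aeval (Matrix.fromBlocks Ma 0 0 Q)) (C r) = r • 1 := by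
          rw [aeval_C]
          simp [Matrix.algebraMap_eq_diagonal, Matrix.smul_one_eq_diagonal]
        rw [hsm]
        constructor
        · rw [Matrix.smul_mulVec, Matrix.one_mulVec, _root_.map_smul, hv, smul_zero]
        · rw [Matrix.smul_mulVec, Matrix.one_mulVec, _root_.map_smul,
            Matrix.smul_mulVec, Matrix.one_mulVec]
      | add p q hp hq =>
        intro v hv
        rw [map_add, Matrix.add_mulVec, Matrix.add_mulVec]
        constructor
        · rw [map_add, (hp v hv).1, (hq v hv).1, add_zero]
        · rw [map_add, (hp v hv).2, (hq v hv).2]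
      | monomial n r hp =>
        intro v hv
        have e : C r * X ^ (n + 1) = C r * X ^ n * X := by ring
        rw [e, _root_.map_mul, aeval_X, ← Matrix.mulVec_mulVec]
        have h1 := hA v hv
        have h2 := hcomm v hv
        constructor
        · exact (hp _ h1).1
        · rw [(hp _ h1).2, h2, Matrix.mulVec_mulVec]
    have hPcomm : ∀ v, φ v = 0 →
        φ ((Matrix.fromBlocks 0 0 0 (1 : Matrix (Fin m) (Fin m) ℝ)).mulVec v) = 0 ∧
        ψ ((Matrix.fromBlocks 0 0 0 (1 : Matrix (Fin m) (Fin m) ℝ)).mulVec v)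
          = (Matrix.fromBlocks 0 0 0 (1 : Matrix (Fin m) (Fin m) ℝ)).mulVec (ψ v) := by
      intro v hv
      have := hpoly f v hv
      rwa [hP] at this
    -- the right summand is contained in ker φ
    have hVQ : ∀ w : Fin m → ℝ, φ (exr w) = 0 := by
      by_contra hc
      push_neg at hc
      obtain ⟨w0, hw0⟩ := hc
      set φr : (Fin m → ℝ) →ₗ[ℝ] ℝ := φ ∘ₗ (exr (ι₁ := Fin ma)) with hφr
      have hw0' : φr w0 ≠ 0 := hw0
      -- ψ maps exr-vectors in ker φ to exr-vectors
      have hstay : ∀ w : Fin m → ℝ, φr w = 0 → ψ (exr w) = exr ((ψ (exr w)) ∘ Sum.inr) := by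
        intro w hw
        have h1 : (Matrix.fromBlocks 0 0 0 (1 : Matrix (Fin m) (Fin m) ℝ)).mulVec
              (exr (ι₁ := Fin ma) w) = exr (ι₁ := Fin ma) w := by
          rw [hPv]; simp
        have h2 := (hPcomm (exr w) hw).2
        rw [h1, hPv] at h2
        rw [exr_apply]; exact h2
      set S := LinearMap.ker φr with hS
      have hSfin : finrank ℝ S + 1 = m := by
        have hrange : LinearMap.range φr = ⊤ := by
          rw [eq_top_iff]
          intro c _
          refine ⟨(c / φr w0) • w0, ?_⟩
          rw [_root_.map_smul, smul_eq_mul, div_mul_cancel₀ c hw0']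
        have hrank := LinearMap.finrank_range_add_finrank_ker φr
        rw [hrange] at hrank
        rw [finrank_top, finrank_self] at hrank
        rw [← hS] at hrank
        have h2 : finrank ℝ (Fin m → ℝ) = m := by simp
        omega
      have hSodd : Odd (finrank ℝ S) := by
        have hEvenm : Even m := by
          have h1 : Odd (ma + m) := by rw [hsum]; exact ⟨nn - 1, by omega⟩
          exact (Nat.odd_add.mp h1).mp hma
        rcases Nat.even_or_odd (finrank ℝ S) with he | ho
        · exfalso
          have : Odd (finrank ℝ S + 1) := Even.add_one he
          rw [hSfin] at this
          exact (Nat.not_odd_iff_even.mpr hEvenm) this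
        · exact ho
      -- restrict ψ to S
      have hψS : ∀ x ∈ S, ((LinearMap.funLeft ℝ ℝ Sum.inr) ∘ₗ ψ ∘ₗ exr) x ∈ S := by
        intro x hx
        have hx' : φr x = 0 := hx
        show φr _ = 0
        have : φ (exr (ψ (exr x) ∘ Sum.inr)) = φ (ψ (exr x)) := by
          rw [← hstay x hx']
        show φ (exr ((ψ (exr x)) ∘ Sum.inr)) = 0
        rw [this]
        exact hφψ _ hx'
      set g := LinearMap.restrict ((LinearMap.funLeft ℝ ℝ Sum.inr) ∘ₗ ψ ∘ₗ exr) hψS with hg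
      refine no_cs_odd hSodd g ?_
      rintro ⟨x, hx⟩
      have hx' : φr x = 0 := hx
      apply Subtype.ext
      show ((LinearMap.funLeft ℝ ℝ Sum.inr) ∘ₗ ψ ∘ₗ exr) (((ψ (exr x)) ∘ Sum.inr)) = -x
      show (ψ (exr ((ψ (exr x)) ∘ Sum.inr))) ∘ Sum.inr = -x
      rw [← hstay x hx', hψψ _ hx']
      rfl
    -- construct J'
    set ψr : (Fin m → ℝ) →ₗ[ℝ] (Fin m → ℝ) := (LinearMap.funLeft ℝ ℝ Sum.inr) ∘ₗ ψ ∘ₗ exr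
      with hψr
    set J' := LinearMap.toMatrix' ψr with hJ'def
    have hJ'v : ∀ w, J'.mulVec w = (ψ (exr w)) ∘ Sum.inr := by
      intro w
      rw [← Matrix.toLin'_apply, hJ'def, Matrix.toLin'_toMatrix']
      rfl
    have hexrψ : ∀ w : Fin m → ℝ, ψ (exr w) = exr ((ψ (exr w)) ∘ Sum.inr) := by
      intro w
      have h1 : (Matrix.fromBlocks 0 0 0 (1 : Matrix (Fin m) (Fin m) ℝ)).mulVec
            (exr (ι₁ := Fin ma) w) = exr (ι₁ := Fin ma) w := by rw [hPv]; simp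
      have h2 := (hPcomm (exr w) (hVQ w)).2
      rw [h1, hPv] at h2
      rw [exr_apply]; exact h2
    have hJ'2 : J' * J' = -1 := by
      apply Matrix.toLin'.injective
      apply LinearMap.ext
      intro w
      rw [Matrix.toLin'_apply, Matrix.toLin'_apply, ← Matrix.mulVec_mulVec, hJ'v, hJ'v,
        ← hexrψ w, hψψ _ (hVQ w)]
      funext i
      simp [Matrix.neg_mulVec, Matrix.one_mulVec]
    have hJ'Q : Q * J' = J' * Q := by
      apply Matrix.toLin'.injective
      apply LinearMap.ext
      intro w
      rw [Matrix.toLin'_apply, Matrix.toLin'_apply, ← Matrix.mulVec_mulVec, ← Matrix.mulVec_mulVec,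
        hJ'v, hJ'v]
      have e1 : exr (Q.mulVec w) = (Matrix.fromBlocks Ma 0 0 Q).mulVec (exr w) := by
        rw [hmulV]
        have : (exr (ι₁ := Fin ma) w) ∘ Sum.inl = 0 := rfl
        rw [this, Matrix.mulVec_zero]
        rfl
      rw [e1, hcomm _ (hVQ w), hmulV]
      rw [hexrψ w]
      rfl
    -- construct complex structure on 𝔤_{Ma}
    have hPb : φ ((Matrix.fromBlocks 0 0 0 (1 : Matrix (Fin m) (Fin m) ℝ)).mulVec b) = 0 := by
      rw [hPv]; exact hVQ _
    set bt : (Fin ma ⊕ Fin m) → ℝ :=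
      b - (Matrix.fromBlocks 0 0 0 (1 : Matrix (Fin m) (Fin m) ℝ)).mulVec b with hbt
    have hφbt : φ bt = 1 := by
      rw [hbt, map_sub, hb, hPb, sub_zero]
    have hbt_exl : bt = exl (b ∘ Sum.inl) := by
      rw [hbt, hPv]
      funext x
      cases x <;> simp
    set φa : (Fin ma → ℝ) →ₗ[ℝ] ℝ := φ ∘ₗ exl with hφa
    set La : (Fin ma → ℝ) →ₗ[ℝ] ((Fin ma ⊕ Fin m) → ℝ) :=
      exl - (LinearMap.toSpanSingleton ℝ _ bt) ∘ₗ φa with hLa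
    set ψa : (Fin ma → ℝ) →ₗ[ℝ] (Fin ma → ℝ) := (LinearMap.funLeft ℝ ℝ Sum.inl) ∘ₗ ψ ∘ₗ La
      with hψa
    have hLaker : ∀ v, φ (La v) = 0 := by
      intro v
      rw [hLa]
      simp only [LinearMap.sub_apply, LinearMap.comp_apply, LinearMap.toSpanSingleton_apply,
        map_sub, _root_.map_smul, hφbt]
      show φa v - φa v * 1 = 0
      ring
    have hLa0 : ∀ v, φa v = 0 → La v = exl v := by
      intro v hv
      rw [hLa]
      simp only [LinearMap.sub_apply, LinearMap.comp_apply, LinearMap.toSpanSingleton_apply, hv,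
        zero_smul, sub_zero]
    have hexlψ : ∀ v : Fin ma → ℝ, φa v = 0 → ψ (exl v) = exl ((ψ (exl v)) ∘ Sum.inl) := by
      intro v hv
      have h1 : ((Matrix.fromBlocks 0 0 0 1 :
            Matrix (Fin ma ⊕ Fin m) (Fin ma ⊕ Fin m) ℝ)).mulVec (exl v) = 0 := by
        rw [hPv]
        funext x; cases x <;> simp [exl]
      have h2 := (hPcomm (exl v) hv).2
      rw [h1, map_zero, hPv] at h2
      have h3 : (ψ (exl v)) ∘ Sum.inr = 0 := by
        have := congrArg (fun u => u ∘ Sum.inr) h2.symm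
        simpa using this
      funext x
      cases x with
      | inl i => rfl
      | inr i => rw [show (exl (ι₂ := Fin m) ((ψ (exl v)) ∘ Sum.inl)) (Sum.inr i) = 0 from rfl]
                 exact congrFun h3 i
    have hAexl : ∀ v : Fin ma → ℝ,
        (Matrix.fromBlocks Ma 0 0 Q).mulVec (exl v) = exl (Ma.mulVec v) := by
      intro v
      rw [hmulV]
      have h1 : (exl (ι₂ := Fin m) v) ∘ Sum.inl = v := rfl
      have h2 : (exl (ι₂ := Fin m) v) ∘ Sum.inr = 0 := rfl
      rw [h1, h2, Matrix.mulVec_zero]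
      rfl
    have hCSMa : HasComplexStructure Ma := by
      refine CS_of_data Ma φa ψa (b ∘ Sum.inl) ?_ ?_ ?_ ?_ ?_ ?_
      · show φ (exl (b ∘ Sum.inl)) = 1
        rw [← hbt_exl]; exact hφbt
      · show (ψ (La (b ∘ Sum.inl))) ∘ Sum.inl = 0
        have : La (b ∘ Sum.inl) = 0 := by
          rw [hLa]
          simp only [LinearMap.sub_apply, LinearMap.comp_apply, LinearMap.toSpanSingleton_apply]
          rw [show φa (b ∘ Sum.inl) = φ (exl (b ∘ Sum.inl)) from rfl, ← hbt_exl, hφbt, one_smul,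
            hbt_exl]
          simp
        rw [this, map_zero]
        rfl
      · intro v hv
        show φ (exl (Ma.mulVec v)) = 0
        rw [← hAexl]
        exact hA _ (by rw [← hLa0 v hv]; exact hLaker v)
      · intro v hv
        have hv' : φ (exl v) = 0 := by rw [← hLa0 v hv]; exact hLaker v
        have hAv0 : φa (Ma.mulVec v) = 0 := by
          show φ (exl (Ma.mulVec v)) = 0
          rw [← hAexl]; exact hA _ hv'
        show (ψ (La (Ma.mulVec v))) ∘ Sum.inl = Ma.mulVec ((ψ (La v)) ∘ Sum.inl)
        rw [hLa0 _ hAv0, hLa0 v hv, ← hAexl, hcomm _ hv', hmulV, hexlψ v hv]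
        rfl
      · intro v hv
        show φa ((ψ (La v)) ∘ Sum.inl) = 0
        rw [hLa0 v hv]
        show φ (exl ((ψ (exl v)) ∘ Sum.inl)) = 0
        rw [← hexlψ v hv]
        exact hφψ _ (by rw [← hLa0 v hv]; exact hLaker v)
      · intro v hv
        have hv' : φ (exl v) = 0 := by rw [← hLa0 v hv]; exact hLaker v
        have hψav : φa ((ψ (La v)) ∘ Sum.inl) = 0 := by
          rw [hLa0 v hv]
          show φ (exl ((ψ (exl v)) ∘ Sum.inl)) = 0
          rw [← hexlψ v hv]
          exact hφψ _ hv'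
        show (ψ (La ((ψ (La v)) ∘ Sum.inl))) ∘ Sum.inl = -v
        rw [hLa0 _ hψav, hLa0 v hv, ← hexlψ v hv, hψψ _ hv']
        rfl
    exact ⟨hCSMa, J', hJ'2, hJ'Q⟩
  · -- reverse direction
    rintro ⟨hCSMa, J', hJ2, hJQ⟩
    obtain ⟨φ1, ψ1, b1, hb1, hψb1, hA1, hcomm1, hφψ1, hψψ1⟩ :=
      data_of_CS (by simpa using hma) Ma hCSMa
    set φ : ((Fin ma ⊕ Fin m) → ℝ) →ₗ[ℝ] ℝ := φ1 ∘ₗ LinearMap.funLeft ℝ ℝ Sum.inl with hφdef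
    set ψ : ((Fin ma ⊕ Fin m) → ℝ) →ₗ[ℝ] ((Fin ma ⊕ Fin m) → ℝ) :=
      exl ∘ₗ ψ1 ∘ₗ (LinearMap.funLeft ℝ ℝ Sum.inl
          - (LinearMap.toSpanSingleton ℝ _ b1) ∘ₗ φ1 ∘ₗ LinearMap.funLeft ℝ ℝ Sum.inl)
        + exr ∘ₗ (Matrix.mulVecLin J') ∘ₗ LinearMap.funLeft ℝ ℝ Sum.inr with hψdef
    have hφ_ap : ∀ v, φ v = φ1 (v ∘ Sum.inl) := fun v => rfl
    have hψ_ap : ∀ v, ψ v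
        = Sum.elim (ψ1 (v ∘ Sum.inl - φ1 (v ∘ Sum.inl) • b1)) (J'.mulVec (v ∘ Sum.inr)) := by
      intro v
      funext x
      cases x <;>
        simp [hψdef, exl, exr, LinearMap.funLeft, Matrix.mulVecLin,
          LinearMap.toSpanSingleton_apply]
    have hψ0_ap : ∀ v, φ1 (v ∘ Sum.inl) = 0 →
        ψ v = Sum.elim (ψ1 (v ∘ Sum.inl)) (J'.mulVec (v ∘ Sum.inr)) := by
      intro v hv
      rw [hψ_ap, hv, zero_smul, sub_zero]
    refine CS_of_data _ φ ψ (exl b1) ?_ ?_ ?_ ?_ ?_ ?_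
    · rw [hφ_ap]
      exact hb1
    · rw [hψ_ap]
      have h1 : (exl (ι₂ := Fin m) b1) ∘ Sum.inl = b1 := rfl
      have h2 : (exl (ι₂ := Fin m) b1) ∘ Sum.inr = 0 := rfl
      rw [h1, h2, hb1, one_smul, sub_self, map_zero, Matrix.mulVec_zero]
      funext x; cases x <;> rfl
    · intro v hv
      rw [hφ_ap] at hv ⊢
      rw [hmulV]
      exact hA1 _ hv
    · intro v hv
      rw [hφ_ap] at hv
      have hAker : φ1 (((Matrix.fromBlocks Ma 0 0 Q).mulVec v) ∘ Sum.inl) = 0 := by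
        rw [hmulV]
        exact hA1 _ hv
      rw [hψ0_ap _ hv, hψ0_ap _ hAker, hmulV, hmulV]
      have e1 : (Sum.elim (Ma.mulVec (v ∘ Sum.inl)) (Q.mulVec (v ∘ Sum.inr))) ∘ Sum.inl
          = Ma.mulVec (v ∘ Sum.inl) := rfl
      have e2 : (Sum.elim (Ma.mulVec (v ∘ Sum.inl)) (Q.mulVec (v ∘ Sum.inr))) ∘ Sum.inr
          = Q.mulVec (v ∘ Sum.inr) := rfl
      have e3 : (Sum.elim (ψ1 (v ∘ Sum.inl)) (J'.mulVec (v ∘ Sum.inr))) ∘ Sum.inl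
          = ψ1 (v ∘ Sum.inl) := rfl
      have e4 : (Sum.elim (ψ1 (v ∘ Sum.inl)) (J'.mulVec (v ∘ Sum.inr))) ∘ Sum.inr
          = J'.mulVec (v ∘ Sum.inr) := rfl
      rw [e1, e2, e3, e4, hcomm1 _ hv, Matrix.mulVec_mulVec, Matrix.mulVec_mulVec, ← hJQ]
    · intro v hv
      rw [hφ_ap] at hv
      rw [hψ0_ap _ hv, hφ_ap]
      exact hφψ1 _ hv
    · intro v hv
      rw [hφ_ap] at hv
      have hφψv : φ1 ((Sum.elim (ψ1 (v ∘ Sum.inl)) (J'.mulVec (v ∘ Sum.inr))) ∘ Sum.inl) = 0 :=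
        hφψ1 _ hv
      rw [hψ0_ap _ hv, hψ0_ap _ hφψv]
      have e3 : (Sum.elim (ψ1 (v ∘ Sum.inl)) (J'.mulVec (v ∘ Sum.inr))) ∘ Sum.inl
          = ψ1 (v ∘ Sum.inl) := rfl
      have e4 : (Sum.elim (ψ1 (v ∘ Sum.inl)) (J'.mulVec (v ∘ Sum.inr))) ∘ Sum.inr
          = J'.mulVec (v ∘ Sum.inr) := rfl
      rw [e3, e4, hψψ1 _ hv, Matrix.mulVec_mulVec, hJ2]
      funext x
      cases x with
      | inl i => simp
      | inr i => simp [Matrix.neg_mulVec, Matrix.one_mulVec]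
end
end
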